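/- arXiv:2107.12935 — 2 statements merged into one kernel-verified Lean document; each statement's English description precedes it below -/
import Mathlib

section
/- Bubble uniting lemma: Let D be a rooted digraph and α an ordinal. Suppose ⟨B_β : β < α⟩ is a sequence where B_β is a v_β-bubble in D for some v_β ∈ V−r, and write B_{<β} := ⋃_{γ<β} B_γ. If for each β < α either v_β = v₀ or v_β ∈ int_D(B_{<β}), then B_{<α} is a v₀-bubble in D. -/
/-!
Common framework: a digraph on a vertex type `V` is given by its edge set
`D : Set (V × V)` (this automatically makes it simple in the sense of having
no parallel edges; absence of loops is the predicate `NoLoops`).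
Paths are nonempty duplicate-free lists of vertices.
-/

universe u

variable {V : Type u}

/-- A (directed) path: a nonempty list of pairwise distinct vertices. -/
structure DiPath (V : Type u) where
  verts : List V
  ne : verts ≠ []
  nodup : verts.Nodup

namespace DiPath

/-- The first vertex of a path. -/
def first (p : DiPath V) : V := p.verts.head p.ne

/-- The last vertex of a path. -/
def last (p : DiPath V) : V := p.verts.getLast p.ne

/-- The set of vertices of a path. -/
def vertexSet (p : DiPath V) : Set V := {x | x ∈ p.verts}

/-- The set of (directed) edges of a path. -/
def edges (p : DiPath V) : Set (V × V) := {e | e ∈ p.verts.zip p.verts.tail}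

/-- The last edge of a path (`none` for a trivial path). -/
def lastEdge (p : DiPath V) : Option (V × V) := (p.verts.zip p.verts.tail).getLast?

/-- The internal vertices of a path. -/
def internal (p : DiPath V) : Set V :=
  {x | x ∈ p.verts ∧ x ≠ p.first ∧ x ≠ p.last}

end DiPath

/-- `p` is a path of the digraph with edge set `D`: consecutive vertices are joined by
edges of `D`. -/
def IsPathIn (D : Set (V × V)) (p : DiPath V) : Prop :=
  List.Chain' (fun a b => (a, b) ∈ D) p.verts

/-- `V⁻(𝒫)`: the set of first vertices of the paths of a path-system. -/
def Vminus (P : Set (DiPath V)) : Set V := DiPath.first '' P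

/-- `V⁺(𝒫)`: the set of last vertices of the paths of a path-system. -/
def Vplus (P : Set (DiPath V)) : Set V := DiPath.last '' P

/-- `E⁺(𝒫)`: the set of last edges of the paths of a path-system. -/
def Eplus (P : Set (DiPath V)) : Set (V × V) := {e | ∃ p ∈ P, p.lastEdge = some e}

/-- `V(𝒫)`: the union of the vertex sets of the paths of a path-system. -/
def vertsOf (P : Set (DiPath V)) : Set V := ⋃ p ∈ P, p.vertexSet

/-- The union of the edge sets of the paths of a path-system. -/
def edgesOf (P : Set (DiPath V)) : Set (V × V) := ⋃ p ∈ P, p.edges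

/-- `in_D(v)`: the ingoing edges of `v` in `D`. -/
def inEdges (D : Set (V × V)) (v : V) : Set (V × V) := {e ∈ D | e.2 = v}

/-- `out_D(v)`: the outgoing edges of `v` in `D`. -/
def outEdges (D : Set (V × V)) (v : V) : Set (V × V) := {e ∈ D | e.1 = v}

/-- `N⁻_D(v)`: the in-neighbours of `v` in `D`. -/
def Nminus (D : Set (V × V)) (v : V) : Set V := {u | (u, v) ∈ D}

/-- A digraph is simple: it has no loops. -/
def NoLoops (D : Set (V × V)) : Prop := ∀ x, (x, x) ∉ D

/-- `r` is a root of `D`: it has no ingoing edges. -/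
def IsRoot (D : Set (V × V)) (r : V) : Prop := ∀ u, (u, r) ∉ D

/-- An internally disjoint system of `r → v` paths in `D`. -/
def IntDisjSys (D : Set (V × V)) (r v : V) (P : Set (DiPath V)) : Prop :=
  (∀ p ∈ P, IsPathIn D p ∧ p.first = r ∧ p.last = v) ∧
  (∀ p ∈ P, ∀ q ∈ P, p ≠ q → p.vertexSet ∩ q.vertexSet ⊆ {r, v})

/-- `𝒢_D(v)` (w.r.t. root `r`): the family of those `I ⊆ in_D(v)` for which some
internally disjoint system `𝒫` of `r → v` paths in `D` satisfies `E⁺(𝒫) = I`. -/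
def GSet (D : Set (V × V)) (r v : V) : Set (Set (V × V)) :=
  {I | I ⊆ inEdges D v ∧ ∃ P, IntDisjSys D r v P ∧ Eplus P = I}

/-- `D` has the vertex-flame property at `v`. -/
def FlameAt (D : Set (V × V)) (r v : V) : Prop := inEdges D v ∈ GSet D r v

/-- `D` has the quasi-vertex-flame property at `v`. -/
def QuasiFlameAt (D : Set (V × V)) (r v : V) : Prop :=
  ∀ I ⊆ inEdges D v, I.Finite → I ∈ GSet D r v

/-- `D` is a quasi-vertex-flame. -/
def QuasiFlame (D : Set (V × V)) (r : V) : Prop := ∀ v, v ≠ r → QuasiFlameAt D r v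

/-- A strongly maximal internally disjoint system of `r → v` paths in `D`. -/
def StronglyMaximal (D : Set (V × V)) (r v : V) (P : Set (DiPath V)) : Prop :=
  IntDisjSys D r v P ∧
  ∀ Q, IntDisjSys D r v Q → Cardinal.mk ↥(Q \ P) ≤ Cardinal.mk ↥(P \ Q)

/-- `L` is large w.r.t. `D` (rooted at `r`): for every `v ≠ r` some strongly maximal
internally disjoint `r → v` path-system of `D` lies in `L`. -/
def IsLarge (D L : Set (V × V)) (r : V) : Prop :=
  ∀ v, v ≠ r → ∃ P, StronglyMaximal D r v P ∧ ∀ p ∈ P, IsPathIn L p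

/-- A `v`-fan: a system of paths of `D` starting at `v` and pairwise sharing only `v`. -/
def Fan (D : Set (V × V)) (v : V) (P : Set (DiPath V)) : Prop :=
  (∀ p ∈ P, IsPathIn D p ∧ p.first = v) ∧
  (∀ p ∈ P, ∀ q ∈ P, p ≠ q → p.vertexSet ∩ q.vertexSet = {v})

/-- A `v`-infan: a system of paths of `D` ending at `v` and pairwise sharing only `v`. -/
def Infan (D : Set (V × V)) (v : V) (P : Set (DiPath V)) : Prop :=
  (∀ p ∈ P, IsPathIn D p ∧ p.last = v) ∧
  (∀ p ∈ P, ∀ q ∈ P, p ≠ q → p.vertexSet ∩ q.vertexSet = {v})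

/-- `X` is linked from `v` in `D`. -/
def LinkedFrom (D : Set (V × V)) (v : V) (X : Set V) : Prop :=
  ∃ P, Fan D v P ∧ Vplus P = X

/-- `X` is linked to `v` in `D`. -/
def LinkedTo (D : Set (V × V)) (v : V) (X : Set V) : Prop :=
  ∃ P, Infan D v P ∧ Vminus P = X

/-- A path-system `P` is orthogonal to `S`: `S` is obtained by choosing exactly one
internal vertex from each path of `P`. -/
def Orthogonal (P : Set (DiPath V)) (S : Set V) : Prop :=
  ∃ f : DiPath V → V, (∀ p ∈ P, f p ∈ p.internal) ∧ Set.InjOn f P ∧ f '' P = S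

/-- `𝔓_D(v,S)`: internally disjoint `r → v` path-systems in `D` orthogonal to `S`. -/
def EMsys (D : Set (V × V)) (r v : V) (S : Set V) : Set (Set (DiPath V)) :=
  {P | IntDisjSys D r v P ∧ Orthogonal P S}

/-- `S` separates `v` from `r` in `D`: every `r → v` path of `D` meets `S`. -/
def SeparatesRV (D : Set (V × V)) (r v : V) (S : Set V) : Prop :=
  ∀ p : DiPath V, IsPathIn D p → p.first = r → p.last = v → ∃ s ∈ S, s ∈ p.verts

/-- `𝔖_D(v)`: the Erdős–Menger separations between `r` and `v`. -/
def EMSep (D : Set (V × V)) (r v : V) : Set (Set V) :=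
  {S | S ⊆ {x | x ≠ r ∧ x ≠ v} ∧ SeparatesRV (D \ {(r, v)}) r v S ∧
    (EMsys D r v S).Nonempty}

/-- `D ↾_v I`: delete the ingoing edges of `v` that are neither in `I` nor equal to `rv`. -/
def restrictIn (D : Set (V × V)) (r v : V) (I : Set (V × V)) : Set (V × V) :=
  {e ∈ D | e.2 = v → (e ∈ I ∨ e = (r, v))}

/-- `ent_D(X)`: the entrance of `X`. -/
def ent (D : Set (V × V)) (X : Set V) : Set V :=
  {v ∈ X | ∃ u, u ∉ X ∧ (u, v) ∈ D}

/-- `int_D(X)`: the interior of `X`. -/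
def intD (D : Set (V × V)) (X : Set V) : Set V := X \ ent D X

/-- The edge set of the induced subdigraph `D[B]`. -/
def induceE (D : Set (V × V)) (B : Set V) : Set (V × V) :=
  {e ∈ D | e.1 ∈ B ∧ e.2 ∈ B}

/-- `B ⊆ V − r` is a `v`-bubble in `D`: there is a `v`-infan `{P_u : u ∈ ent_D(B) − v}`
in `D[B]` where `P_u` starts at `u`. -/
def IsBubble (D : Set (V × V)) (r v : V) (B : Set V) : Prop :=
  B ⊆ {x | x ≠ r} ∧ ∃ P, Infan (induceE D B) v P ∧ Vminus P = ent D B \ {v}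

/-- `B_{D,v}`: the union of all `v`-bubbles of `D` (the largest `v`-bubble, when it exists). -/
def maxBubble (D : Set (V × V)) (r v : V) : Set V := ⋃₀ {B | IsBubble D r v B}

/-- An anti-bubble of `D`: a set `A ⊆ V − r` whose entrance is linked from `r` in `D`. -/
def AntiBubble (D : Set (V × V)) (r : V) (A : Set V) : Prop :=
  A ⊆ {x | x ≠ r} ∧ LinkedFrom D r (ent D A)

/-- `A_{D,v}`: the intersection of all anti-bubbles of `D` containing `{v} ∪ N⁻_{D−rv}(v)`. -/
def Acap (D : Set (V × V)) (r v : V) : Set V :=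
  ⋂₀ {A | AntiBubble D r A ∧ insert v (Nminus (D \ {(r, v)}) v) ⊆ A}

/-- `T_{D,v} := ent_{D−rv}(A_{D,v})`. -/
def Tsep (D : Set (V × V)) (r v : V) : Set V := ent (D \ {(r, v)}) (Acap D r v)

/-- `S_{L,v} := ent_{L−rv}(B_{L,v})`. -/
def Ssep (L : Set (V × V)) (r v : V) : Set V := ent (L \ {(r, v)}) (maxBubble L r v)

/-- An `X → Y` path: exactly its first vertex lies in `X` and exactly its last vertex in `Y`. -/
def XYPath (X Y : Set V) (p : DiPath V) : Prop :=
  p.vertexSet ∩ X = {p.first} ∧ p.vertexSet ∩ Y = {p.last}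

/-- A system of pairwise vertex-disjoint `X → Y` paths in `D`. -/
def DisjSys (D : Set (V × V)) (X Y : Set V) (P : Set (DiPath V)) : Prop :=
  (∀ p ∈ P, IsPathIn D p ∧ XYPath X Y p) ∧
  (∀ p ∈ P, ∀ q ∈ P, p ≠ q → Disjoint p.vertexSet q.vertexSet)

/-- The vertex list of `P v Q`: the initial segment of `P` up to `v` followed by the
terminal segment of `Q` from `v`. -/
def spliceVerts [DecidableEq V] (p q : DiPath V) (v : V) : List V :=
  p.verts.takeWhile (fun x => decide (x ≠ v)) ++ q.verts.dropWhile (fun x => decide (x ≠ v))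

/-! ### Auxiliary machinery for the bubble uniting lemma -/

open scoped Classical

namespace BubbleAux

theorem head_eq_of_eq {l l' : List V} (h : l = l') (hl : l ≠ []) :
    l.head hl = l'.head (h ▸ hl) := by subst h; rfl

theorem getLast_eq_of_eq {l l' : List V} (h : l = l') (hl : l ≠ []) :
    l.getLast hl = l'.getLast (h ▸ hl) := by subst h; rfl

/-- Truncate a list at the first element belonging to `S` (inclusive);
if no element of `S` occurs, return the whole list. -/
noncomputable def cutL : List V → Set V → List V
  | [], _ => []
  | a :: t, S => if a ∈ S then [a] else a :: cutL t S

theorem cutL_cons_pos {a : V} (t : List V) {S : Set V} (ha : a ∈ S) :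
    cutL (a :: t) S = [a] := by simp [cutL, ha]

theorem cutL_cons_neg {a : V} (t : List V) {S : Set V} (ha : a ∉ S) :
    cutL (a :: t) S = a :: cutL t S := by simp [cutL, ha]

theorem cutL_prefix (l : List V) (S : Set V) : cutL l S <+: l := by
  induction l with
  | nil => simp [cutL]
  | cons a t ih =>
    by_cases h : a ∈ S
    · rw [cutL_cons_pos t h]; exact ⟨t, rfl⟩
    · rw [cutL_cons_neg t h]; exact ⟨ih.choose, by rw [List.cons_append, ih.choose_spec]⟩

theorem cutL_sublist (l : List V) (S : Set V) : List.Sublist (cutL l S) l :=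
  (cutL_prefix l S).sublist

theorem cutL_subset {l : List V} {S : Set V} {a : V} (h : a ∈ cutL l S) : a ∈ l :=
  (cutL_sublist l S).mem h

theorem cutL_ne {l : List V} (h : l ≠ []) (S : Set V) : cutL l S ≠ [] := by
  cases l with
  | nil => exact absurd rfl h
  | cons a t => by_cases hh : a ∈ S <;> simp [cutL, hh]

theorem cutL_head {l : List V} (h : l ≠ []) (S : Set V) :
    (cutL l S).head (cutL_ne h S) = l.head h := by
  cases l with
  | nil => exact absurd rfl h
  | cons a t =>
    by_cases hh : a ∈ S
    · rw [head_eq_of_eq (cutL_cons_pos t hh) (cutL_ne h S)]; simp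
    · rw [head_eq_of_eq (cutL_cons_neg t hh) (cutL_ne h S)]; simp

theorem cutL_mem_last {l : List V} {S : Set V} {a : V} (ha : a ∈ cutL l S) (haS : a ∈ S) :
    a = (cutL l S).getLast (List.ne_nil_of_mem ha) := by
  induction l with
  | nil => simp [cutL] at ha
  | cons b t ih =>
    by_cases hb : b ∈ S
    · rw [getLast_eq_of_eq (cutL_cons_pos t hb) (List.ne_nil_of_mem ha)]
      rw [cutL_cons_pos t hb] at ha
      simpa using ha
    · rw [getLast_eq_of_eq (cutL_cons_neg t hb) (List.ne_nil_of_mem ha)]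
      rw [cutL_cons_neg t hb] at ha
      rcases List.mem_cons.1 ha with rfl | ha'
      · exact absurd haS hb
      · have hne : cutL t S ≠ [] := List.ne_nil_of_mem ha'
        rw [List.getLast_cons hne]
        exact ih ha'

theorem cutL_last_mem {l : List V} {S : Set V} {a : V} (hal : a ∈ l) (haS : a ∈ S)
    (h : cutL l S ≠ []) : (cutL l S).getLast h ∈ S := by
  induction l with
  | nil => simp at hal
  | cons b t ih =>
    by_cases hb : b ∈ S
    · rw [getLast_eq_of_eq (cutL_cons_pos t hb) h]; simpa using hb
    · have hat : a ∈ t := by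
        rcases List.mem_cons.1 hal with rfl | h'
        · exact absurd haS hb
        · exact h'
      have htne : cutL t S ≠ [] := cutL_ne (List.ne_nil_of_mem hat) S
      rw [getLast_eq_of_eq (cutL_cons_neg t hb) h, List.getLast_cons htne]
      exact ih hat htne

theorem cutL_eq_of_forall {l : List V} {S : Set V} (h : ∀ a ∈ l, a ∉ S) : cutL l S = l := by
  induction l with
  | nil => rfl
  | cons b t ih =>
    rw [cutL_cons_neg t (h b (List.mem_cons_self)),
      ih fun a ha => h a (List.mem_cons_of_mem _ ha)]

theorem cutL_pred {l : List V} {S : Set V} {R : V → V → Prop}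
    (hchain : List.Chain' R l) (hne : l ≠ []) (hhead : l.head hne ∉ S)
    (hcne : cutL l S ≠ []) (hlast : (cutL l S).getLast hcne ∈ S) :
    ∃ y, y ∉ S ∧ R y ((cutL l S).getLast hcne) := by
  induction l with
  | nil => exact absurd rfl hne
  | cons a t ih =>
    have ha : a ∉ S := hhead
    cases t with
    | nil =>
      rw [getLast_eq_of_eq (cutL_cons_neg [] ha) hcne] at hlast
      simp [cutL] at hlast
      exact absurd hlast ha
    | cons b t' =>
      have hch : List.Chain' R (b :: t') := hchain.tail
      have hab : R a b := (List.isChain_cons_cons.1 hchain).1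
      have hbne : cutL (b :: t') S ≠ [] := cutL_ne (List.cons_ne_nil _ _) S
      have heq : (cutL (a :: b :: t') S).getLast hcne
          = (cutL (b :: t') S).getLast hbne := by
        rw [getLast_eq_of_eq (cutL_cons_neg (b :: t') ha) hcne, List.getLast_cons hbne]
      rw [heq] at hlast ⊢
      by_cases hb : b ∈ S
      · refine ⟨a, ha, ?_⟩
        rw [getLast_eq_of_eq (cutL_cons_pos t' hb) hbne]
        simpa using hab
      · exact ih hch (List.cons_ne_nil _ _) hb hbne hlast


theorem dipath_ext {p q : DiPath V} (h : p.verts = q.verts) : p = q := by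
  cases p; cases q; simpa using h

theorem first_mem (p : DiPath V) : p.first ∈ p.verts := List.head_mem p.ne

theorem last_mem (p : DiPath V) : p.last ∈ p.verts := List.getLast_mem p.ne

theorem tail_ne_of_first_ne_last {p : DiPath V} (h : p.first ≠ p.last) :
    p.verts.tail ≠ [] := by
  rcases p with ⟨l, hne, hnd⟩
  cases l with
  | nil => exact absurd rfl hne
  | cons a t =>
    cases t with
    | nil => simp [DiPath.first, DiPath.last] at h
    | cons b t' => simp

theorem first_not_mem_tail (p : DiPath V) : p.first ∉ p.verts.tail := by
  rcases p with ⟨l, hne, hnd⟩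
  cases l with
  | nil => exact absurd rfl hne
  | cons a t =>
    simp only [DiPath.first, List.head_cons, List.tail_cons]
    exact (List.nodup_cons.1 hnd).1

/-- Splice two paths: `p` followed by the tail of `q`, filtering out repetitions
(no repetitions occur in the intended use). -/
noncomputable def splice (p q : DiPath V) : DiPath V :=
  ⟨p.verts ++ (q.verts.tail.filter fun a => decide (a ∉ p.vertexSet)), by simp [p.ne], by
    refine List.Nodup.append p.nodup ((q.nodup.sublist (List.tail_sublist _)).filter _) ?_
    intro a hap haf
    have := (List.mem_filter.1 haf).2
    simp only [decide_eq_true_eq] at this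
    exact this hap⟩

theorem splice_verts {p q : DiPath V}
    (h : ∀ a ∈ q.verts.tail, a ∉ p.vertexSet) :
    (splice p q).verts = p.verts ++ q.verts.tail := by
  show p.verts ++ _ = _
  rw [List.filter_eq_self.2 fun a ha => by simpa using h a ha]

theorem mem_splice_iff {p q : DiPath V} {a : V} :
    a ∈ (splice p q).verts → a ∈ p.verts ∨ a ∈ q.verts := by
  intro h
  rcases List.mem_append.1 h with h | h
  · exact Or.inl h
  · exact Or.inr (List.mem_of_mem_tail (List.mem_filter.1 h).1)

theorem isPathIn_mono {D₁ D₂ : Set (V × V)} (h : D₁ ⊆ D₂) {p : DiPath V}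
    (hp : IsPathIn D₁ p) : IsPathIn D₂ p :=
  hp.imp fun _ _ hab => h hab

theorem induceE_mono (D : Set (V × V)) {W W' : Set V} (h : W ⊆ W') :
    induceE D W ⊆ induceE D W' := fun e he => ⟨he.1, h he.2.1, h he.2.2⟩

theorem induceE_subset (D : Set (V × V)) (W : Set V) : induceE D W ⊆ D :=
  fun _ he => he.1

theorem mem_of_chain'_induce {D : Set (V × V)} {W : Set V} :
    ∀ (l : List V), List.Chain' (fun a b => (a, b) ∈ induceE D W) l →
      (∀ h : l ≠ [], l.head h ∈ W) → ∀ a ∈ l, a ∈ W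
  | [], _, _, a, ha => by simp at ha
  | [b], _, hh, a, ha => by
      rcases List.mem_singleton.1 ha with rfl
      exact hh (by simp)
  | b :: c :: t, hch, hh, a, ha => by
      have hbc : (b, c) ∈ induceE D W := (List.isChain_cons_cons.1 hch).1
      rcases List.mem_cons.1 ha with rfl | ha'
      · exact hh (by simp)
      · exact mem_of_chain'_induce (c :: t) (List.isChain_cons_cons.1 hch).2
          (fun _ => hbc.2.2) a ha'

theorem verts_subset_of_isPathIn {D : Set (V × V)} {W : Set V} {p : DiPath V}
    (hp : IsPathIn (induceE D W) p) (hf : p.first ∈ W) : ∀ a ∈ p.verts, a ∈ W :=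
  mem_of_chain'_induce p.verts hp fun _ => hf


section Main

variable (D : Set (V × V)) (α : Ordinal.{u}) (B : Ordinal.{u} → Set V) (vb : Ordinal.{u} → V)

/-- `B_{<β}`. -/
def Ble (β : Ordinal.{u}) : Set V := ⋃ γ ∈ Set.Iio β, B γ

theorem mem_Ble {β : Ordinal.{u}} {a : V} : a ∈ Ble B β ↔ ∃ γ < β, a ∈ B γ := by
  simp [Ble]

theorem Ble_mono {β γ : Ordinal.{u}} (h : β ≤ γ) : Ble B β ⊆ Ble B γ := by
  intro a ha
  rcases (mem_Ble B).1 ha with ⟨δ, hδ, haδ⟩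
  exact (mem_Ble B).2 ⟨δ, lt_of_lt_of_le hδ h, haδ⟩

theorem B_subset_Ble {β γ : Ordinal.{u}} (h : γ < β) : B γ ⊆ Ble B β :=
  fun a ha => (mem_Ble B).2 ⟨γ, h, ha⟩

/-- The first stage at which a vertex occurs. -/
noncomputable def sg (u : V) : Ordinal.{u} := sInf {β | β < α ∧ u ∈ B β}

theorem sg_le {γ : Ordinal.{u}} {u : V} (hγ : γ < α) (hu : u ∈ B γ) : sg α B u ≤ γ :=
  csInf_le' ⟨hγ, hu⟩

theorem sg_mem {γ : Ordinal.{u}} {u : V} (hγ : γ < α) (hu : u ∈ B γ) :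
    sg α B u < α ∧ u ∈ B (sg α B u) :=
  csInf_mem (⟨γ, hγ, hu⟩ : Set.Nonempty {β | β < α ∧ u ∈ B β})

theorem sg_lt_of_mem_Ble {β : Ordinal.{u}} {u : V} (hβ : β ≤ α) (hu : u ∈ Ble B β) :
    sg α B u < β := by
  rcases (mem_Ble B).1 hu with ⟨γ, hγβ, huγ⟩
  exact lt_of_le_of_lt (sg_le α B (lt_of_lt_of_le hγβ hβ) huγ) hγβ

theorem not_mem_Ble_sg {u : V} (h : sg α B u < α) : u ∉ Ble B (sg α B u) :=
  fun hu => lt_irrefl _ (sg_lt_of_mem_Ble α B h.le hu)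

variable (hB : ∀ β < α, ∃ P, Infan (induceE D (B β)) (vb β) P ∧
  Vminus P = ent D (B β) \ {vb β})
variable (hcond : ∀ β < α, vb β = vb 0 ∨ vb β ∈ intD D (⋃ γ ∈ Set.Iio β, B γ))

/-- The chosen infan for the bubble `B β`. -/
noncomputable def Psys (β : Ordinal.{u}) : Set (DiPath V) :=
  if h : β < α then (hB β h).choose else ∅

theorem Psys_spec {β : Ordinal.{u}} (h : β < α) :
    Infan (induceE D (B β)) (vb β) (Psys D α B vb hB β) ∧
      Vminus (Psys D α B vb hB β) = ent D (B β) \ {vb β} := by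
  rw [Psys, dif_pos h]
  exact (hB β h).choose_spec

theorem psys_pair {β : Ordinal.{u}} (hβ : β < α) {p q : DiPath V}
    (hp : p ∈ Psys D α B vb hB β) (hq : q ∈ Psys D α B vb hB β) (hpq : p ≠ q)
    {c : V} (hc : c ∈ p.verts) (hc' : c ∈ q.verts) : c = vb β := by
  have h := ((Psys_spec D α B vb hB hβ).1.2 p hp q hq hpq)
  have : c ∈ p.vertexSet ∩ q.vertexSet := ⟨hc, hc'⟩
  rw [h] at this
  exact this

/-- A vertex is *active* if it occurs at some stage and is an entrance vertex of the
bubble of its first stage (and differs from `v₀`). -/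
def Act (u : V) : Prop := u ≠ vb 0 ∧ sg α B u < α ∧ u ∈ ent D (B (sg α B u))

theorem Act.sg_lt {u : V} (h : Act D α B vb u) : sg α B u < α := h.2.1

theorem Act.mem_B {u : V} (h : Act D α B vb u) : u ∈ B (sg α B u) := h.2.2.1

theorem Act.not_mem_Ble {u : V} (h : Act D α B vb u) : u ∉ Ble B (sg α B u) :=
  not_mem_Ble_sg α B h.sg_lt

include hcond in
theorem Act.ne_vb_sg {u : V} (h : Act D α B vb u) : u ≠ vb (sg α B u) := by
  rcases hcond _ h.sg_lt with h0 | hint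
  · rw [h0]; exact h.1
  · intro he
    have h2 : vb (sg α B u) ∈ Ble B (sg α B u) := hint.1
    rw [← he] at h2
    exact absurd h2 (Act.not_mem_Ble D α B vb h)

/-- The chosen infan path starting at an active vertex. -/
noncomputable def Qp (u : V) : DiPath V :=
  if h : ∃ p ∈ Psys D α B vb hB (sg α B u), p.first = u then h.choose
  else ⟨[u], by simp, by simp⟩

include hcond in
theorem Qp_spec {u : V} (hu : Act D α B vb u) :
    Qp D α B vb hB u ∈ Psys D α B vb hB (sg α B u) ∧ (Qp D α B vb hB u).first = u := by
  have hex : ∃ p ∈ Psys D α B vb hB (sg α B u), p.first = u := by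
    have : u ∈ Vminus (Psys D α B vb hB (sg α B u)) := by
      rw [(Psys_spec D α B vb hB hu.sg_lt).2]
      exact ⟨hu.2.2, Act.ne_vb_sg D α B vb hcond hu⟩
    rcases this with ⟨p, hp, hpu⟩
    exact ⟨p, hp, hpu⟩
  rw [Qp, dif_pos hex]
  exact hex.choose_spec

include hcond in
theorem Qp_path {u : V} (hu : Act D α B vb u) :
    IsPathIn (induceE D (B (sg α B u))) (Qp D α B vb hB u) :=
  ((Psys_spec D α B vb hB hu.sg_lt).1.1 _ (Qp_spec D α B vb hB hcond hu).1).1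

include hcond in
theorem Qp_last {u : V} (hu : Act D α B vb u) :
    (Qp D α B vb hB u).last = vb (sg α B u) :=
  ((Psys_spec D α B vb hB hu.sg_lt).1.1 _ (Qp_spec D α B vb hB hcond hu).1).2

include hcond in
theorem Qp_verts {u : V} (hu : Act D α B vb u) :
    ∀ a ∈ (Qp D α B vb hB u).verts, a ∈ B (sg α B u) := by
  refine BubbleAux.verts_subset_of_isPathIn (Qp_path D α B vb hB hcond hu) ?_
  rw [(Qp_spec D α B vb hB hcond hu).2]
  exact hu.2.2.1

/-- The initial segment of `Qp u` up to (and including) the first vertex in `B_{<σ(u)}`. -/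
noncomputable def tp (u : V) : DiPath V :=
  ⟨cutL (Qp D α B vb hB u).verts (Ble B (sg α B u)),
    cutL_ne (Qp D α B vb hB u).ne _,
    (Qp D α B vb hB u).nodup.sublist (cutL_sublist _ _)⟩

/-- The pivot vertex: the last vertex of `tp u`. -/
noncomputable def xv (u : V) : V := (tp D α B vb hB u).last

/-- The recursion guard. -/
def condP (u : V) : Prop :=
  sg α B (xv D α B vb hB u) < sg α B u ∧ xv D α B vb hB u ∈ Ble B (sg α B u) ∧
    xv D α B vb hB u ≠ vb 0

include hcond in
theorem tp_first {u : V} (hu : Act D α B vb u) : (tp D α B vb hB u).first = u := by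
  show ((tp D α B vb hB u).verts).head _ = u
  have h := cutL_head (Qp D α B vb hB u).ne (Ble B (sg α B u))
  exact h.trans (Qp_spec D α B vb hB hcond hu).2

theorem tp_subset {u : V} {a : V} (ha : a ∈ (tp D α B vb hB u).verts) :
    a ∈ (Qp D α B vb hB u).verts := cutL_subset ha

include hcond in
theorem tp_verts {u : V} (hu : Act D α B vb u) :
    ∀ a ∈ (tp D α B vb hB u).verts, a ∈ B (sg α B u) := fun a ha =>
  Qp_verts D α B vb hB hcond hu a (tp_subset D α B vb hB ha)

theorem tp_mem_last {u : V} {a : V} (ha : a ∈ (tp D α B vb hB u).verts)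
    (haS : a ∈ Ble B (sg α B u)) : a = xv D α B vb hB u :=
  cutL_mem_last ha haS

include hcond in
theorem tp_path {u : V} (hu : Act D α B vb u) :
    IsPathIn (induceE D (B (sg α B u))) (tp D α B vb hB u) :=
  (Qp_path D α B vb hB hcond hu).prefix (cutL_prefix _ _)

theorem xv_mem_tp (u : V) : xv D α B vb hB u ∈ (tp D α B vb hB u).verts :=
  last_mem _

theorem xv_mem_Q (u : V) : xv D α B vb hB u ∈ (Qp D α B vb hB u).verts :=
  tp_subset D α B vb hB (xv_mem_tp D α B vb hB u)

theorem tp_eq_of_not {u : V} (h : xv D α B vb hB u ∉ Ble B (sg α B u)) :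
    (tp D α B vb hB u).verts = (Qp D α B vb hB u).verts := by
  refine cutL_eq_of_forall fun a ha haS => h ?_
  exact (cutL_last_mem ha haS (tp D α B vb hB u).ne : _)

include hcond in
theorem pred_xv {u : V} (hu : Act D α B vb u) (h : xv D α B vb hB u ∈ Ble B (sg α B u)) :
    ∃ y, y ∉ Ble B (sg α B u) ∧ (y, xv D α B vb hB u) ∈ D := by
  have hhead : (Qp D α B vb hB u).verts.head (Qp D α B vb hB u).ne ∉ Ble B (sg α B u) := by
    have : (Qp D α B vb hB u).verts.head (Qp D α B vb hB u).ne = u :=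
      (Qp_spec D α B vb hB hcond hu).2
    rw [this]
    exact Act.not_mem_Ble D α B vb hu
  rcases cutL_pred (Qp_path D α B vb hB hcond hu) (Qp D α B vb hB u).ne hhead
      (tp D α B vb hB u).ne h with ⟨y, hy1, hy2⟩
  exact ⟨y, hy1, (hy2 : _ ∈ induceE D _).1⟩

include hcond in
theorem condP_of {u : V} (hu : Act D α B vb u) (h1 : xv D α B vb hB u ∈ Ble B (sg α B u))
    (h2 : xv D α B vb hB u ≠ vb 0) : condP D α B vb hB u :=
  ⟨sg_lt_of_mem_Ble α B (Act.sg_lt D α B vb hu).le h1, h1, h2⟩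

include hcond in
theorem Act_xv {u : V} (hu : Act D α B vb u) (hc : condP D α B vb hB u) :
    Act D α B vb (xv D α B vb hB u) := by
  rcases (mem_Ble B).1 hc.2.1 with ⟨γ, hγ, hmem⟩
  have hγα : γ < α := lt_trans hγ (Act.sg_lt D α B vb hu)
  obtain ⟨hlt, hmemB⟩ := sg_mem α B hγα hmem
  refine ⟨hc.2.2, hlt, hmemB, ?_⟩
  rcases pred_xv D α B vb hB hcond hu hc.2.1 with ⟨y, hy1, hy2⟩
  exact ⟨y, fun hyB => hy1 (B_subset_Ble B hc.1 hyB), hy2⟩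

include hcond in
theorem xv_ne_vb {u : V} (hu : Act D α B vb u) (hc : condP D α B vb hB u) :
    xv D α B vb hB u ≠ vb (sg α B u) := by
  rcases hcond _ hu.sg_lt with h0 | hint
  · rw [h0]; exact hc.2.2
  · intro he
    rcases pred_xv D α B vb hB hcond hu hc.2.1 with ⟨y, hy1, hy2⟩
    have : xv D α B vb hB u ∈ ent D (Ble B (sg α B u)) := ⟨hc.2.1, y, hy1, hy2⟩
    rw [he] at this
    exact hint.2 this

include hcond in
theorem not_on_Q {β : Ordinal.{u}} (hβ : β < α) {q : DiPath V}
    (hq : q ∈ Psys D α B vb hB β) {c : V} (hcq : c ∈ q.verts) (hcf : c ≠ q.first)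
    (hc1 : c ∈ B β) (hent : ∃ y, y ∉ B β ∧ (y, c) ∈ D) (hcvb : c ≠ vb β) : False := by
  have hcm : c ∈ Vminus (Psys D α B vb hB β) := by
    rw [(Psys_spec D α B vb hB hβ).2]
    rcases hent with ⟨y, hy1, hy2⟩
    exact ⟨⟨hc1, y, hy1, hy2⟩, hcvb⟩
  rcases hcm with ⟨p, hp, hpf⟩
  have hpq : p ≠ q := fun he => hcf (by rw [← hpf, he])
  have : c ∈ p.verts := by rw [← hpf]; exact first_mem p
  exact hcvb (psys_pair D α B vb hB hβ hp hq hpq this hcq)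

include hcond in
theorem xv_inj {a b : V} (ha : Act D α B vb a) (hb : Act D α B vb b)
    (hca : condP D α B vb hB a) (hcb : condP D α B vb hB b)
    (hσ : sg α B b ≤ sg α B a) (hxx : xv D α B vb hB a = xv D α B vb hB b) : a = b := by
  by_contra hab
  rcases lt_or_eq_of_le hσ with hlt | heq
  · -- different stages: contradiction
    rcases pred_xv D α B vb hB hcond ha hca.2.1 with ⟨y, hy1, hy2⟩
    refine not_on_Q D α B vb hB hcond hb.sg_lt (Qp_spec D α B vb hB hcond hb).1
      (xv_mem_Q D α B vb hB b) ?_ ?_ ?_ ?_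
    · rw [(Qp_spec D α B vb hB hcond hb).2]
      intro he2
      have hm := hcb.2.1
      rw [he2] at hm
      exact Act.not_mem_Ble D α B vb hb hm
    · exact Qp_verts D α B vb hB hcond hb _ (xv_mem_Q D α B vb hB b)
    · refine ⟨y, fun hyB => hy1 (B_subset_Ble B hlt hyB), ?_⟩
      rw [← hxx]; exact hy2
    · exact xv_ne_vb D α B vb hB hcond hb hcb
  · -- same stage
    have hQne : Qp D α B vb hB a ≠ Qp D α B vb hB b := fun he => hab (by
      rw [← (Qp_spec D α B vb hB hcond ha).2, ← (Qp_spec D α B vb hB hcond hb).2, he])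
    have hmemb : xv D α B vb hB a ∈ (Qp D α B vb hB b).verts := by
      rw [hxx]; exact xv_mem_Q D α B vb hB b
    have hq2 : Qp D α B vb hB b ∈ Psys D α B vb hB (sg α B a) := by
      rw [← heq]; exact (Qp_spec D α B vb hB hcond hb).1
    have := psys_pair D α B vb hB ha.sg_lt (Qp_spec D α B vb hB hcond ha).1 hq2 hQne
      (xv_mem_Q D α B vb hB a) hmemb
    exact xv_ne_vb D α B vb hB hcond ha hca this

include hcond in
theorem ent_not_xv {w u : V} (hw : Act D α B vb w) (hcw : condP D α B vb hB w)
    (hu : u ∈ ent D (Ble B α)) (hu0 : u ≠ vb 0) (he : u = xv D α B vb hB w) : False := by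
  rcases hu.2 with ⟨z, hz1, hz2⟩
  refine not_on_Q D α B vb hB hcond hw.sg_lt (Qp_spec D α B vb hB hcond hw).1
    (he ▸ xv_mem_Q D α B vb hB w : u ∈ _) ?_ ?_ ?_ ?_
  · rw [(Qp_spec D α B vb hB hcond hw).2]
    intro h2
    have hm := hcw.2.1
    rw [← he, h2] at hm
    exact Act.not_mem_Ble D α B vb hw hm
  · rw [he]; exact Qp_verts D α B vb hB hcond hw _ (xv_mem_Q D α B vb hB w)
  · exact ⟨z, fun hzB => hz1 (B_subset_Ble B hw.sg_lt hzB), hz2⟩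
  · rw [he]; exact xv_ne_vb D α B vb hB hcond hw hcw

theorem wfrel : WellFounded (fun a b : V => sg α B a < sg α B b) :=
  InvImage.wf (sg α B) Ordinal.lt_wf

/-- The recursively spliced path from an active vertex to `v₀`. -/
noncomputable def Rp : V → DiPath V :=
  (wfrel α B).fix fun u ih =>
    if h : condP D α B vb hB u then splice (tp D α B vb hB u) (ih (xv D α B vb hB u) h.1)
    else tp D α B vb hB u

theorem Rp_eq (u : V) :
    Rp D α B vb hB u =
      if h : condP D α B vb hB u then
        splice (tp D α B vb hB u) (Rp D α B vb hB (xv D α B vb hB u))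
      else tp D α B vb hB u := by
  show (wfrel α B).fix _ u = _
  rw [WellFounded.fix_eq]
  rfl

/-- The ancestry set of a vertex along the recursion. -/
noncomputable def AncS : V → Set V :=
  (wfrel α B).fix fun u ih =>
    insert u (if h : condP D α B vb hB u then ih (xv D α B vb hB u) h.1 else ∅)

theorem AncS_eq (u : V) :
    AncS D α B vb hB u =
      insert u (if condP D α B vb hB u then AncS D α B vb hB (xv D α B vb hB u) else ∅) := by
  show (wfrel α B).fix _ u = _
  rw [WellFounded.fix_eq]
  by_cases h : condP D α B vb hB u
  · rw [dif_pos h, if_pos h]; rfl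
  · rw [dif_neg h, if_neg h]

theorem mem_AncS_iff {a b : V} :
    b ∈ AncS D α B vb hB a ↔
      b = a ∨ (condP D α B vb hB a ∧ b ∈ AncS D α B vb hB (xv D α B vb hB a)) := by
  rw [AncS_eq]
  by_cases h : condP D α B vb hB a
  · simp [h]
  · simp [h]

theorem mem_AncS_self (a : V) : a ∈ AncS D α B vb hB a :=
  (mem_AncS_iff D α B vb hB).2 (Or.inl rfl)

theorem mem_AncS_of_xv {a b : V} (h : condP D α B vb hB a)
    (hb : b ∈ AncS D α B vb hB (xv D α B vb hB a)) : b ∈ AncS D α B vb hB a :=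
  (mem_AncS_iff D α B vb hB).2 (Or.inr ⟨h, hb⟩)

theorem xv_mem_AncS {a : V} (h : condP D α B vb hB a) :
    xv D α B vb hB a ∈ AncS D α B vb hB a :=
  mem_AncS_of_xv D α B vb hB h (mem_AncS_self D α B vb hB _)

theorem sg_of_mem_AncS : ∀ a : V, ∀ b ∈ AncS D α B vb hB a,
    b = a ∨ sg α B b < sg α B a := by
  intro a
  induction a using (wfrel α B).induction with
  | _ a ih =>
    intro b hb
    rcases (mem_AncS_iff D α B vb hB).1 hb with rfl | ⟨hc, hb'⟩
    · exact Or.inl rfl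
    · rcases ih _ hc.1 b hb' with rfl | hlt
      · exact Or.inr hc.1
      · exact Or.inr (lt_trans hlt hc.1)

theorem AncS_antisymm {a b : V} (hab : a ∈ AncS D α B vb hB b)
    (hba : b ∈ AncS D α B vb hB a) : a = b := by
  rcases sg_of_mem_AncS D α B vb hB b a hab with h | h
  · exact h
  · rcases sg_of_mem_AncS D α B vb hB a b hba with h' | h'
    · exact h'.symm
    · exact absurd h' (lt_asymm h)

include hcond in
theorem AncS_src : ∀ w : V, ∀ u ∈ AncS D α B vb hB w, Act D α B vb w →
    u = w ∨ ∃ c, Act D α B vb c ∧ condP D α B vb hB c ∧ u = xv D α B vb hB c := by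
  intro w
  induction w using (wfrel α B).induction with
  | _ w ih =>
    intro u hu hw
    rcases (mem_AncS_iff D α B vb hB).1 hu with rfl | ⟨hc, hu'⟩
    · exact Or.inl rfl
    · rcases ih _ hc.1 u hu' (Act_xv D α B vb hB hcond hw hc) with rfl | hex
      · exact Or.inr ⟨w, hw, hc, rfl⟩
      · exact Or.inr hex

theorem getLast_tail' {l : List V} (h : l.tail ≠ []) (h' : l ≠ []) :
    l.tail.getLast h = l.getLast h' := by
  cases l with
  | nil => exact absurd rfl h'
  | cons a t => exact (List.getLast_cons h).symm

/-- The invariant bundle for `Rp`. -/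
def GoodP (u : V) : Prop :=
  (Rp D α B vb hB u).first = u ∧ (Rp D α B vb hB u).last = vb 0 ∧
    IsPathIn (induceE D (Ble B α)) (Rp D α B vb hB u) ∧
    (∀ a ∈ (Rp D α B vb hB u).verts, a ∈ B (sg α B u) ∨ a ∈ Ble B (sg α B u)) ∧
    (condP D α B vb hB u →
      (Rp D α B vb hB u).verts = (tp D α B vb hB u).verts ++
        (Rp D α B vb hB (xv D α B vb hB u)).verts.tail) ∧
    (¬ condP D α B vb hB u → Rp D α B vb hB u = tp D α B vb hB u)

include hcond in
theorem goodP : ∀ u : V, Act D α B vb u → GoodP D α B vb hB u := by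
  intro u
  induction u using (wfrel α B).induction with
  | _ u ih =>
    intro hu
    by_cases hc : condP D α B vb hB u
    · -- recursive case
      have hax : Act D α B vb (xv D α B vb hB u) := Act_xv D α B vb hB hcond hu hc
      have G' := ih _ hc.1 hax
      -- the tail of the recursive path avoids `tp u`
      have htail_sub : ∀ a ∈ (Rp D α B vb hB (xv D α B vb hB u)).verts.tail,
          a ∉ (tp D α B vb hB u).vertexSet := by
        intro a ha hamem
        have haR : a ∈ (Rp D α B vb hB (xv D α B vb hB u)).verts := List.mem_of_mem_tail ha
        have haB : a ∈ Ble B (sg α B u) := by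
          rcases G'.2.2.2.1 a haR with h | h
          · exact B_subset_Ble B hc.1 h
          · exact Ble_mono B (le_of_lt hc.1) h
        have hax2 : a = xv D α B vb hB u := tp_mem_last D α B vb hB hamem haB
        rw [hax2] at ha
        exact first_not_mem_tail (Rp D α B vb hB (xv D α B vb hB u))
          (by rw [G'.1]; exact ha)
      have hverts : (Rp D α B vb hB u).verts = (tp D α B vb hB u).verts ++
          (Rp D α B vb hB (xv D α B vb hB u)).verts.tail := by
        rw [Rp_eq, dif_pos hc]
        exact splice_verts htail_sub
      have htne : (Rp D α B vb hB (xv D α B vb hB u)).verts.tail ≠ [] := by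
        refine tail_ne_of_first_ne_last ?_
        rw [G'.1, G'.2.1]
        exact hc.2.2
      have hfirst : (Rp D α B vb hB u).first = u := by
        show (Rp D α B vb hB u).verts.head _ = u
        rw [head_eq_of_eq hverts, List.head_append_of_ne_nil (tp D α B vb hB u).ne]
        exact tp_first D α B vb hB hcond hu
      have hlast : (Rp D α B vb hB u).last = vb 0 := by
        show (Rp D α B vb hB u).verts.getLast _ = vb 0
        rw [getLast_eq_of_eq hverts, List.getLast_append_of_ne_nil _ htne,
          getLast_tail' htne (Rp D α B vb hB (xv D α B vb hB u)).ne]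
        exact G'.2.1
      have hpath : IsPathIn (induceE D (Ble B α)) (Rp D α B vb hB u) := by
        show List.Chain' _ (Rp D α B vb hB u).verts
        rw [hverts]
        refine List.isChain_append.2 ⟨?_, (G'.2.2.1 : List.Chain' _ _).tail, ?_⟩
        · exact isPathIn_mono (induceE_mono D (B_subset_Ble B hu.2.1))
            (tp_path D α B vb hB hcond hu)
        · intro y hy z hz
          have hy' : y = xv D α B vb hB u := by
            have := List.getLast?_eq_getLast (l := (tp D α B vb hB u).verts) (tp D α B vb hB u).ne
            rw [this] at hy
            exact (Option.some_injective _ hy.symm :)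
          subst hy'
          -- recover the first edge of `Rp (xv u)`
          have hvx : (Rp D α B vb hB (xv D α B vb hB u)).verts
              = xv D α B vb hB u :: (Rp D α B vb hB (xv D α B vb hB u)).verts.tail := by
            conv_lhs => rw [← List.cons_head_tail (Rp D α B vb hB (xv D α B vb hB u)).ne]
            congr 1
            exact G'.1
          cases htl : (Rp D α B vb hB (xv D α B vb hB u)).verts.tail with
          | nil => exact absurd htl htne
          | cons z' rest =>
            rw [htl] at hz hvx
            simp only [List.head?_cons, Option.mem_def, Option.some.injEq] at hz
            subst hz
            have hch : List.Chain' (fun a b => (a, b) ∈ induceE D (Ble B α))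
                (Rp D α B vb hB (xv D α B vb hB u)).verts := G'.2.2.1
            rw [hvx] at hch
            exact (List.isChain_cons_cons.1 hch).1
      refine ⟨hfirst, hlast, hpath, ?_, fun _ => hverts, fun h => absurd hc h⟩
      · intro a ha
        rw [hverts] at ha
        rcases List.mem_append.1 ha with h | h
        · exact Or.inl (tp_verts D α B vb hB hcond hu a h)
        · right
          rcases G'.2.2.2.1 a (List.mem_of_mem_tail h) with h' | h'
          · exact B_subset_Ble B hc.1 h'
          · exact Ble_mono B (le_of_lt hc.1) h'
    · -- base case
      have hRt : Rp D α B vb hB u = tp D α B vb hB u := by rw [Rp_eq, dif_neg hc]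
      have hxv : xv D α B vb hB u ∉ Ble B (sg α B u) ∨ xv D α B vb hB u = vb 0 := by
        by_cases h1 : xv D α B vb hB u ∈ Ble B (sg α B u)
        · by_cases h2 : xv D α B vb hB u = vb 0
          · exact Or.inr h2
          · exact absurd (condP_of D α B vb hB hcond hu h1 h2) hc
        · exact Or.inl h1
      have hlast : (Rp D α B vb hB u).last = vb 0 := by
        rcases hxv with h1 | h2
        · have hQ : (tp D α B vb hB u).verts = (Qp D α B vb hB u).verts :=
            tp_eq_of_not D α B vb hB h1
          have : (tp D α B vb hB u).last = vb (sg α B u) := by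
            show (tp D α B vb hB u).verts.getLast _ = _
            rw [getLast_eq_of_eq hQ]
            exact Qp_last D α B vb hB hcond hu
          rcases hcond _ hu.2.1 with h0 | hint
          · rw [hRt, this, h0]
          · exfalso
            apply h1
            show xv D α B vb hB u ∈ Ble B (sg α B u)
            have hxeq : xv D α B vb hB u = vb (sg α B u) := this
            rw [hxeq]
            exact hint.1
        · rw [hRt]; exact h2
      refine ⟨by rw [hRt]; exact tp_first D α B vb hB hcond hu, hlast, ?_, ?_,
        fun h => absurd h hc, fun _ => hRt⟩
      · rw [hRt]
        exact isPathIn_mono (induceE_mono D (B_subset_Ble B hu.2.1))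
          (tp_path D α B vb hB hcond hu)
      · intro a ha
        rw [hRt] at ha
        exact Or.inl (tp_verts D α B vb hB hcond hu a ha)

include hcond in
theorem L1 : ∀ b : V, Act D α B vb b → ∀ a : V, Act D α B vb a → condP D α B vb hB a →
    xv D α B vb hB a ∈ AncS D α B vb hB b →
    a ∈ AncS D α B vb hB b ∨ b ∈ AncS D α B vb hB a := by
  intro b
  induction b using (wfrel α B).induction with
  | _ b ihb =>
    intro hb a ha hca hmem
    rcases (mem_AncS_iff D α B vb hB).1 hmem with heq | ⟨hcb, hmem'⟩
    · right; rw [← heq]; exact xv_mem_AncS D α B vb hB hca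
    · by_cases hab : a = b
      · left; rw [hab]; exact mem_AncS_self D α B vb hB b
      · by_cases hxx : xv D α B vb hB a = xv D α B vb hB b
        · rcases le_total (sg α B b) (sg α B a) with h | h
          · exact absurd (xv_inj D α B vb hB hcond ha hb hca hcb h hxx) hab
          · exact absurd (xv_inj D α B vb hB hcond hb ha hcb hca h hxx.symm)
              fun e => hab e.symm
        · rcases ihb _ hcb.1 (Act_xv D α B vb hB hcond hb hcb) a ha hca hmem' with h | h
          · left; exact mem_AncS_of_xv D α B vb hB hcb h
          · rcases (mem_AncS_iff D α B vb hB).1 h with heq2 | ⟨hca2, h2⟩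
            · left; rw [← heq2]; exact xv_mem_AncS D α B vb hB hcb
            · exact absurd (AncS_antisymm D α B vb hB hmem' h2) hxx

include hcond in
theorem AncS_compar : ∀ a : V, Act D α B vb a → ∀ b : V, Act D α B vb b → ∀ c : V,
    c ∈ AncS D α B vb hB a → c ∈ AncS D α B vb hB b →
    a ∈ AncS D α B vb hB b ∨ b ∈ AncS D α B vb hB a := by
  intro a
  induction a using (wfrel α B).induction with
  | _ a iha =>
    intro ha b hb c hca hcb
    rcases (mem_AncS_iff D α B vb hB).1 hca with heq | ⟨hc, hca'⟩
    · left; rw [← heq]; exact hcb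
    · rcases iha _ hc.1 (Act_xv D α B vb hB hcond ha hc) b hb c hca' hcb with h | h
      · exact L1 D α B vb hB hcond b hb a ha hc h
      · right; exact mem_AncS_of_xv D α B vb hB hc h

include hcond in
theorem case1 {a b c : V} (ha : Act D α B vb a) (hb : Act D α B vb b)
    (hba : b ∉ AncS D α B vb hB a) (hab : a ≠ b) (hσ : sg α B b ≤ sg α B a)
    (hc0 : c ≠ vb 0) (hca : c ∈ (tp D α B vb hB a).verts)
    (hcb : c ∈ (tp D α B vb hB b).verts) : False := by
  rcases lt_or_eq_of_le hσ with hlt | heq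
  · -- strictly smaller stage for `b`
    have hcB : c ∈ B (sg α B b) := tp_verts D α B vb hB hcond hb c hcb
    have hcBle : c ∈ Ble B (sg α B a) := B_subset_Ble B hlt hcB
    have hcx : c = xv D α B vb hB a := tp_mem_last D α B vb hB hca hcBle
    have hcnd : condP D α B vb hB a :=
      condP_of D α B vb hB hcond ha (by rw [← hcx]; exact hcBle) (by rw [← hcx]; exact hc0)
    have hcneb : c ≠ b := fun he =>
      hba (by rw [← he, hcx]; exact xv_mem_AncS D α B vb hB hcnd)
    rcases pred_xv D α B vb hB hcond ha hcnd.2.1 with ⟨y, hy1, hy2⟩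
    refine not_on_Q D α B vb hB hcond hb.2.1 (Qp_spec D α B vb hB hcond hb).1
      (tp_subset D α B vb hB hcb) ?_ hcB ?_ ?_
    · rw [(Qp_spec D α B vb hB hcond hb).2]; exact hcneb
    · exact ⟨y, fun hyB => hy1 (B_subset_Ble B hlt hyB), by rw [hcx]; exact hy2⟩
    · intro he
      rcases hcond _ hb.2.1 with h0 | hint
      · exact hc0 (he.trans h0)
      · have hent2 : c ∈ ent D (Ble B (sg α B b)) := by
          refine ⟨by rw [he]; exact hint.1, y, fun hyB => hy1 (Ble_mono B hlt.le hyB), ?_⟩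
          rw [hcx]; exact hy2
        rw [he] at hent2
        exact hint.2 hent2
  · -- equal stages
    have hQne : Qp D α B vb hB a ≠ Qp D α B vb hB b := fun he => hab (by
      rw [← (Qp_spec D α B vb hB hcond ha).2, ← (Qp_spec D α B vb hB hcond hb).2, he])
    have hq2 : Qp D α B vb hB b ∈ Psys D α B vb hB (sg α B a) := by
      rw [← heq]; exact (Qp_spec D α B vb hB hcond hb).1
    have hcv : c = vb (sg α B a) :=
      psys_pair D α B vb hB ha.2.1 (Qp_spec D α B vb hB hcond ha).1 hq2 hQne
        (tp_subset D α B vb hB hca) (tp_subset D α B vb hB hcb)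
    rcases hcond _ ha.2.1 with h0 | hint
    · exact hc0 (hcv.trans h0)
    · have hcBle : c ∈ Ble B (sg α B a) := by rw [hcv]; exact hint.1
      have hcxa : c = xv D α B vb hB a := tp_mem_last D α B vb hB hca hcBle
      have hcxb : c = xv D α B vb hB b := by
        refine tp_mem_last D α B vb hB hcb ?_
        rw [heq]; exact hcBle
      have hcnda : condP D α B vb hB a :=
        condP_of D α B vb hB hcond ha (by rw [← hcxa]; exact hcBle) (by rw [← hcxa]; exact hc0)
      have hcndb : condP D α B vb hB b := by
        refine condP_of D α B vb hB hcond hb ?_ (by rw [← hcxb]; exact hc0)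
        rw [← hcxb, heq]; exact hcBle
      exact hab (xv_inj D α B vb hB hcond ha hb hcnda hcndb hσ (by rw [← hcxa, ← hcxb]))

/-- A replacement for the natural sum: the rank of a pair under `Prod.GameAdd`. -/
noncomputable def nsum (a b : Ordinal.{u}) : Ordinal.{u+1} :=
  ((WellFounded.prod_gameAdd Ordinal.lt_wf Ordinal.lt_wf).apply (a, b)).rank

theorem nsum_lt_left {b c : Ordinal.{u}} (h : b < c) (a : Ordinal.{u}) : nsum a b < nsum a c :=
  Acc.rank_lt_of_rel _ (Prod.GameAdd.snd h)

theorem nsum_lt_right {b c : Ordinal.{u}} (h : b < c) (a : Ordinal.{u}) : nsum b a < nsum c a :=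
  Acc.rank_lt_of_rel _ (Prod.GameAdd.fst h)

include hcond in
theorem inter_Rp : ∀ o : Ordinal.{u+1}, ∀ a b c : V, Act D α B vb a → Act D α B vb b →
    a ∉ AncS D α B vb hB b → b ∉ AncS D α B vb hB a →
    nsum (sg α B a) (sg α B b) ≤ o →
    c ∈ (Rp D α B vb hB a).verts → c ∈ (Rp D α B vb hB b).verts → c = vb 0 := by
  intro o
  induction o using Ordinal.induction with
  | _ o IH =>
    intro a b c ha hb hab hba hle hca hcb
    by_contra hc0
    have hane : a ≠ b := fun he => hab (by rw [he]; exact mem_AncS_self D α B vb hB b)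
    have hdec : ∀ u, Act D α B vb u → c ∈ (Rp D α B vb hB u).verts →
        c ∈ (tp D α B vb hB u).verts ∨
          (condP D α B vb hB u ∧ c ∈ (Rp D α B vb hB (xv D α B vb hB u)).verts) := by
      intro u hu hcu
      by_cases hcnd : condP D α B vb hB u
      · have hv := (goodP D α B vb hB hcond u hu).2.2.2.2.1 hcnd
        rw [hv] at hcu
        rcases List.mem_append.1 hcu with h | h
        · exact Or.inl h
        · exact Or.inr ⟨hcnd, List.mem_of_mem_tail h⟩
      · have hv := (goodP D α B vb hB hcond u hu).2.2.2.2.2 hcnd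
        rw [hv] at hcu
        exact Or.inl hcu
    rcases hdec a ha hca with h1 | ⟨hcnda, h1⟩
    · rcases hdec b hb hcb with h2 | ⟨hcndb, h2⟩
      · rcases le_total (sg α B b) (sg α B a) with h | h
        · exact case1 D α B vb hB hcond ha hb hba hane h hc0 h1 h2
        · exact case1 D α B vb hB hcond hb ha hab (Ne.symm hane) h hc0 h2 h1
      · refine hc0 (IH (nsum (sg α B a) (sg α B (xv D α B vb hB b))) ?_ a
          (xv D α B vb hB b) c ha (Act_xv D α B vb hB hcond hb hcndb) ?_ ?_ le_rfl hca h2)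
        · exact lt_of_lt_of_le (nsum_lt_left hcndb.1 _) hle
        · intro h; exact hab (mem_AncS_of_xv D α B vb hB hcndb h)
        · intro h
          rcases L1 D α B vb hB hcond a ha b hb hcndb h with h' | h'
          · exact hba h'
          · exact hab h'
    · refine hc0 (IH (nsum (sg α B (xv D α B vb hB a)) (sg α B b)) ?_
        (xv D α B vb hB a) b c (Act_xv D α B vb hB hcond ha hcnda) hb ?_ ?_ le_rfl h1 hcb)
      · exact lt_of_lt_of_le (nsum_lt_right hcnda.1 _) hle
      · intro h
        rcases L1 D α B vb hB hcond b hb a ha hcnda h with h' | h'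
        · exact hab h'
        · exact hba h'
      · intro h
        exact hba (mem_AncS_of_xv D α B vb hB hcnda h)

include hB hcond in
theorem main_exists : ∃ P, Infan (induceE D (Ble B α)) (vb 0) P ∧
    Vminus P = ent D (Ble B α) \ {vb 0} := by
  have hact : ∀ u ∈ ent D (Ble B α) \ {vb 0}, Act D α B vb u := by
    rintro u ⟨⟨humem, z, hz1, hz2⟩, hune⟩
    have hune' : u ≠ vb 0 := hune
    rcases (mem_Ble B).1 humem with ⟨γ, hγ, hm⟩
    obtain ⟨h1, h2⟩ := sg_mem α B hγ hm
    exact ⟨hune', h1, h2, z, fun hzB => hz1 (B_subset_Ble B h1 hzB), hz2⟩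
  have hnanc : ∀ u ∈ ent D (Ble B α) \ {vb 0}, ∀ w ∈ ent D (Ble B α) \ {vb 0},
      u ≠ w → u ∉ AncS D α B vb hB w := by
    intro u hu w hw hne hmem
    rcases AncS_src D α B vb hB hcond w u hmem (hact w hw) with h | ⟨cc, hc1, hc2, hc3⟩
    · exact hne h
    · exact ent_not_xv D α B vb hB hcond hc1 hc2 hu.1 hu.2 hc3
  refine ⟨Rp D α B vb hB '' (ent D (Ble B α) \ {vb 0}), ⟨?_, ?_⟩, ?_⟩
  · rintro p ⟨u, hu, rfl⟩
    exact ⟨(goodP D α B vb hB hcond u (hact u hu)).2.2.1,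
      (goodP D α B vb hB hcond u (hact u hu)).2.1⟩
  · rintro p ⟨u, hu, rfl⟩ q ⟨w, hw, rfl⟩ hpq
    have hne : u ≠ w := fun he => hpq (by rw [he])
    ext c
    constructor
    · rintro ⟨hc1, hc2⟩
      exact inter_Rp D α B vb hB hcond (nsum (sg α B u) (sg α B w)) u w c
        (hact u hu) (hact w hw) (hnanc u hu w hw hne) (hnanc w hw u hu hne.symm) le_rfl hc1 hc2
    · intro hcc
      have hcc' : c = vb 0 := hcc
      subst hcc'
      constructor
      · show vb 0 ∈ (Rp D α B vb hB u).verts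
        rw [← (goodP D α B vb hB hcond u (hact u hu)).2.1]
        exact last_mem _
      · show vb 0 ∈ (Rp D α B vb hB w).verts
        rw [← (goodP D α B vb hB hcond w (hact w hw)).2.1]
        exact last_mem _
  · ext u2
    constructor
    · rintro ⟨p, ⟨w, hw, rfl⟩, rfl⟩
      rw [(goodP D α B vb hB hcond w (hact w hw)).1]
      exact hw
    · intro hu
      exact ⟨Rp D α B vb hB u2, ⟨u2, hu, rfl⟩, (goodP D α B vb hB hcond u2 (hact u2 hu)).1⟩

end Main

end BubbleAux

/-- **Bubble uniting lemma.** If `⟨B_β : β < α⟩` is a sequence with `B_β` a `v_β`-bubble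
in `D` and for each `β < α` either `v_β = v₀` or `v_β ∈ int_D(B_{<β})`, then
`B_{<α} = ⋃_{β<α} B_β` is a `v₀`-bubble in `D`. -/
theorem bubble_uniting (D : Set (V × V)) (r : V)
    (hsimple : NoLoops D) (hroot : IsRoot D r)
    (α : Ordinal.{u}) (B : Ordinal.{u} → Set V) (vb : Ordinal.{u} → V)
    (hv : ∀ β < α, vb β ≠ r)
    (hB : ∀ β < α, IsBubble D r (vb β) (B β))
    (hcond : ∀ β < α, vb β = vb 0 ∨ vb β ∈ intD D (⋃ γ ∈ Set.Iio β, B γ)) :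
    IsBubble D r (vb 0) (⋃ β ∈ Set.Iio α, B β) := by
  constructor
  · intro x hx
    rcases Set.mem_iUnion₂.1 hx with ⟨β, hβ, hxB⟩
    exact (hB β hβ).1 hxB
  · exact BubbleAux.main_exists D α B vb (fun β h => (hB β h).2) hcond
end

section
/- For every v ∈ V−r in a rooted digraph D there is a ⊆-largest v-bubble B_{D,v} in D, and B_{D,v} contains all in-neighbours of v in D−rv. -/
/-!
Common framework: a digraph on a vertex type `V` is given by its edge set
`D : Set (V × V)` (this automatically makes it simple in the sense of having
no parallel edges; absence of loops is the predicate `NoLoops`).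
Paths are nonempty duplicate-free lists of vertices.
-/

universe u

variable {V : Type u}

section LargestBubbleAux

open Classical

/-- Membership in the entrance, unfolded. -/
lemma LB_mem_ent {D : Set (V × V)} {X : Set V} {x : V} :
    x ∈ ent D X ↔ x ∈ X ∧ ∃ u, u ∉ X ∧ (u, x) ∈ D := Iff.rfl

lemma LB_induceE_mono {D : Set (V × V)} {B₁ B₂ : Set V} (h : B₁ ⊆ B₂) :
    induceE D B₁ ⊆ induceE D B₂ := fun _ he => ⟨he.1, h he.2.1, h he.2.2⟩

lemma LB_ent_of_subset {D : Set (V × V)} {B' B : Set V} {x : V} (hsub : B' ⊆ B)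
    (hx : x ∈ ent D B) (hxB' : x ∈ B') : x ∈ ent D B' := by
  obtain ⟨-, u, hu, hedge⟩ := hx
  exact ⟨hxB', u, fun h => hu (hsub h), hedge⟩

lemma LB_DiPath_ext {p q : DiPath V} (h : p.verts = q.verts) : p = q := by
  cases p; cases q; simpa using h

lemma LB_getLast_congr {l l' : List V} (h : l = l') (h1 : l ≠ []) (h2 : l' ≠ []) :
    l.getLast h1 = l'.getLast h2 := by subst h; rfl

lemma LB_head_congr {l l' : List V} (h : l = l') (h1 : l ≠ []) (h2 : l' ≠ []) :
    l.head h1 = l'.head h2 := by subst h; rfl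

/-- A "successor function" certificate for being a `v`-bubble (apart from the
root condition). -/
structure LBCert (D : Set (V × V)) (v : V) (B : Set V) : Type u where
  W : Set V
  f : V → V
  hv : v ∉ W
  hE : ent D B \ {v} ⊆ W
  edge : ∀ x ∈ W, (x, f x) ∈ induceE D B
  nxt : ∀ x ∈ W, f x = v ∨ f x ∈ W
  inj : ∀ x ∈ W, ∀ y ∈ W, f x = f y → f x ≠ v → x = y
  noE : ∀ x ∈ W, f x ∉ ent D B \ {v}
  reach : ∀ x ∈ W, ∃ n : ℕ, f^[n + 1] x = v

/-- A path of a path system through a given vertex. -/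
noncomputable def LBpathOf (P : Set (DiPath V)) (x : V) : DiPath V :=
  if h : ∃ p ∈ P, x ∈ p.verts then h.choose else ⟨[x], by simp, by simp⟩

lemma LBpathOf_spec {P : Set (DiPath V)} {x : V} (h : ∃ p ∈ P, x ∈ p.verts) :
    LBpathOf P x ∈ P ∧ x ∈ (LBpathOf P x).verts := by
  rw [LBpathOf, dif_pos h]
  exact ⟨h.choose_spec.1, h.choose_spec.2⟩

/-- The successor of a vertex along its path. -/
noncomputable def LBfnext [DecidableEq V] (P : Set (DiPath V)) (v : V) (x : V) : V :=
  (LBpathOf P x).verts.getD ((LBpathOf P x).verts.idxOf x + 1) v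

lemma LB_indexOf_add_one_lt [DecidableEq V] {l : List V} (hne : l ≠ []) {x : V}
    (hx : x ∈ l) (hxl : x ≠ l.getLast hne) : l.idxOf x + 1 < l.length := by
  have hi : l.idxOf x < l.length := List.idxOf_lt_length_iff.2 hx
  by_contra hcon
  push_neg at hcon
  apply hxl
  conv_lhs => rw [← List.idxOf_get hi]
  rw [List.getLast_eq_getElem]
  simp only [List.get_eq_getElem]
  congr 1
  omega

lemma LB_indexOf_head [DecidableEq V] {l : List V} (h : l ≠ []) :
    l.idxOf (l.head h) = 0 := by
  obtain ⟨a, t, rfl⟩ := List.exists_cons_of_ne_nil h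
  simp

theorem LB_cert_of_bubble {D : Set (V × V)} {r v : V} {B : Set V}
    (h : IsBubble D r v B) : Nonempty (LBCert D v B) := by
  classical
  obtain ⟨hBr, P, hInf, hVm⟩ := h
  have hpath : ∀ p ∈ P, IsPathIn (induceE D B) p := fun p hp => (hInf.1 p hp).1
  have hlast : ∀ p ∈ P, p.last = v := fun p hp => (hInf.1 p hp).2
  have huniq : ∀ p ∈ P, ∀ q ∈ P, ∀ x, x ∈ p.verts → x ∈ q.verts → x ≠ v → p = q := by
    intro p hp q hq x hxp hxq hxv
    by_contra hne
    have h2 := hInf.2 p hp q hq hne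
    have h3 : x ∈ p.vertexSet ∩ q.vertexSet := ⟨hxp, hxq⟩
    rw [h2] at h3
    exact hxv h3
  set W : Set V := {x | x ≠ v ∧ ∃ p ∈ P, x ∈ p.verts} with hW
  -- the key facts about the successor
  have key : ∀ x ∈ W, (x, LBfnext P v x) ∈ induceE D B ∧
      LBfnext P v x ∈ (LBpathOf P x).verts ∧
      (LBpathOf P x).verts.idxOf (LBfnext P v x) = (LBpathOf P x).verts.idxOf x + 1 ∧
      LBpathOf P x ∈ P ∧ x ∈ (LBpathOf P x).verts := by
    rintro x ⟨hxv, hex⟩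
    obtain ⟨hpP, hxp⟩ := LBpathOf_spec hex
    set p := LBpathOf P x with hp
    have hxlast : x ≠ p.verts.getLast p.ne := by
      intro hh
      exact hxv (hh.trans (hlast p hpP))
    have hi : p.verts.idxOf x < p.verts.length := List.idxOf_lt_length_iff.2 hxp
    have hi1 : p.verts.idxOf x + 1 < p.verts.length :=
      LB_indexOf_add_one_lt p.ne hxp hxlast
    have hfx : LBfnext P v x = p.verts.get ⟨p.verts.idxOf x + 1, hi1⟩ := by
      rw [LBfnext, ← hp]
      exact List.getD_eq_get _ _ ⟨_, hi1⟩
    have hmem : LBfnext P v x ∈ p.verts := by rw [hfx]; exact List.get_mem _ _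
    refine ⟨?_, hmem, ?_, hpP, hxp⟩
    · have hch := hpath p hpP
      rw [IsPathIn] at hch
      replace hch : List.IsChain (fun a b => (a, b) ∈ induceE D B) p.verts := hch
      rw [List.isChain_iff_getElem] at hch
      have := hch (p.verts.idxOf x) (by omega)
      rw [show p.verts[p.verts.idxOf x] = x from List.idxOf_get hi] at this
      rw [hfx]
      exact this
    · have hj : p.verts.idxOf (LBfnext P v x) < p.verts.length :=
        List.idxOf_lt_length_iff.2 hmem
      have h4 : p.verts.get ⟨p.verts.idxOf (LBfnext P v x), hj⟩
          = p.verts.get ⟨p.verts.idxOf x + 1, hi1⟩ := by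
        rw [List.idxOf_get hj, hfx]
      have h5 := (p.nodup.get_inj_iff).1 h4
      simpa using h5
  refine ⟨⟨W, LBfnext P v, ?_, ?_, ?_, ?_, ?_, ?_, ?_⟩⟩
  · intro h; exact h.1 rfl
  · intro u hu
    have hu' : u ∈ Vminus P := hVm ▸ hu
    obtain ⟨p, hp, hfirst⟩ := hu'
    have huv : u ≠ v := hu.2
    refine ⟨huv, p, hp, ?_⟩
    rw [← hfirst]
    exact List.head_mem p.ne
  · intro x hx; exact (key x hx).1
  · intro x hx
    by_cases hz : LBfnext P v x = v
    · exact Or.inl hz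
    · exact Or.inr ⟨hz, LBpathOf P x, (key x hx).2.2.2.1, (key x hx).2.1⟩
  · intro x hx y hy heq hnev
    obtain ⟨hex, hzx, hix, hpx, hxmem⟩ := key x hx
    obtain ⟨hey, hzy, hiy, hpy, hymem⟩ := key y hy
    have hpq : LBpathOf P x = LBpathOf P y :=
      huniq _ hpx _ hpy (LBfnext P v x) hzx (heq ▸ hzy) hnev
    rw [← hpq] at hiy hymem
    rw [heq, hiy] at hix
    have hiix : (LBpathOf P x).verts.idxOf x < (LBpathOf P x).verts.length :=
      List.idxOf_lt_length_iff.2 hxmem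
    have hiiy : (LBpathOf P x).verts.idxOf y < (LBpathOf P x).verts.length :=
      List.idxOf_lt_length_iff.2 hymem
    have : (LBpathOf P x).verts.get ⟨(LBpathOf P x).verts.idxOf x, hiix⟩
        = (LBpathOf P x).verts.get ⟨(LBpathOf P x).verts.idxOf y, hiiy⟩ := by
      congr 1
      apply Fin.ext
      show (LBpathOf P x).verts.idxOf x = (LBpathOf P x).verts.idxOf y
      omega
    rw [List.idxOf_get hiix, List.idxOf_get hiiy] at this
    exact this
  · intro x hx hcon
    obtain ⟨hex, hzx, hix, hpx, hxmem⟩ := key x hx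
    have hzv : LBfnext P v x ≠ v := hcon.2
    have h1 : LBfnext P v x ∈ Vminus P := hVm ▸ hcon
    obtain ⟨q, hq, hfirst⟩ := h1
    have hzq : LBfnext P v x ∈ q.verts := by
      rw [← hfirst]; exact List.head_mem q.ne
    have hqp : q = LBpathOf P x := huniq _ hq _ hpx _ hzq hzx hzv
    -- the first vertex has index 0, contradiction with index = i + 1
    have h0 : q.verts.idxOf (LBfnext P v x) = 0 := by
      rw [← hfirst]
      exact LB_indexOf_head q.ne
    rw [hqp, hix] at h0
    omega
  · -- reach
    have main : ∀ m : ℕ, ∀ x ∈ W,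
        (LBpathOf P x).verts.length - (LBpathOf P x).verts.idxOf x ≤ m →
        ∃ n : ℕ, (LBfnext P v)^[n + 1] x = v := by
      intro m
      induction m with
      | zero =>
        intro x hx hm
        obtain ⟨-, -, -, hpx, hxmem⟩ := key x hx
        have := List.idxOf_lt_length_iff.2 hxmem
        omega
      | succ m ih =>
        intro x hx hm
        by_cases hz : LBfnext P v x = v
        · exact ⟨0, by simpa using hz⟩
        · obtain ⟨hex, hzx, hix, hpx, hxmem⟩ := key x hx
          have hzW : LBfnext P v x ∈ W := ⟨hz, LBpathOf P x, hpx, hzx⟩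
          have hpq : LBpathOf P (LBfnext P v x) = LBpathOf P x := by
            obtain ⟨hq, hzq⟩ := LBpathOf_spec ⟨LBpathOf P x, hpx, hzx⟩
            exact huniq _ hq _ hpx _ hzq hzx hz
          have hrec : (LBpathOf P (LBfnext P v x)).verts.length -
              (LBpathOf P (LBfnext P v x)).verts.idxOf (LBfnext P v x) ≤ m := by
            rw [hpq, hix]
            have h1 : (LBpathOf P x).verts.idxOf x + 1 < (LBpathOf P x).verts.length := by
              obtain ⟨-, hzx2⟩ := LBpathOf_spec ⟨LBpathOf P x, hpx, hzx⟩
              have hxlast : x ≠ (LBpathOf P x).verts.getLast (LBpathOf P x).ne := by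
                intro hh
                exact hx.1 (hh.trans (hlast _ hpx))
              exact LB_indexOf_add_one_lt _ hxmem hxlast
            omega
          obtain ⟨n, hn⟩ := ih _ hzW hrec
          exact ⟨n + 1, by rw [Function.iterate_succ_apply]; exact hn⟩
    exact fun x hx => main _ x hx le_rfl

end LargestBubbleAux
section LargestBubbleAux2

/-- Trajectory list of a successor function. -/
def LBtl (f : V → V) : ℕ → V → List V
  | 0, x => [x]
  | n + 1, x => x :: LBtl f n (f x)

lemma LBtl_ne (f : V → V) (n : ℕ) (x : V) : LBtl f n x ≠ [] := by
  cases n <;> simp [LBtl]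

lemma LBtl_head? (f : V → V) (n : ℕ) (x : V) : (LBtl f n x).head? = some x := by
  cases n <;> rfl

lemma LBtl_head (f : V → V) (n : ℕ) (x : V) (h : LBtl f n x ≠ []) :
    (LBtl f n x).head h = x := by
  cases n <;> rfl

lemma LBtl_getLast (f : V → V) (n : ℕ) (x : V) (h : LBtl f n x ≠ []) :
    (LBtl f n x).getLast h = f^[n] x := by
  induction n generalizing x with
  | zero => simp [LBtl]
  | succ n ih =>
    show (x :: LBtl f n (f x)).getLast _ = _
    rw [List.getLast_cons (LBtl_ne f n (f x)), ih, Function.iterate_succ_apply]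

lemma LBtl_mem {f : V → V} {n : ℕ} {x y : V} :
    y ∈ LBtl f n x ↔ ∃ t, t ≤ n ∧ f^[t] x = y := by
  induction n generalizing x with
  | zero =>
    simp only [LBtl, List.mem_singleton]
    constructor
    · rintro rfl; exact ⟨0, le_rfl, rfl⟩
    · rintro ⟨t, ht, rfl⟩; rw [Nat.le_zero.1 ht]; rfl
  | succ n ih =>
    show y ∈ x :: LBtl f n (f x) ↔ _
    rw [List.mem_cons, ih]
    constructor
    · rintro (rfl | ⟨t, ht, rfl⟩)
      · exact ⟨0, by omega, rfl⟩
      · exact ⟨t + 1, by omega, by rw [Function.iterate_succ_apply]⟩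
    · rintro ⟨t, ht, rfl⟩
      cases t with
      | zero => exact Or.inl rfl
      | succ t => exact Or.inr ⟨t, by omega, by rw [← Function.iterate_succ_apply]⟩

lemma LBtl_chain' {R : V → V → Prop} {f : V → V} {n : ℕ} {x : V}
    (h : ∀ t < n, R (f^[t] x) (f^[t + 1] x)) : List.Chain' R (LBtl f n x) := by
  induction n generalizing x with
  | zero => exact List.isChain_singleton _
  | succ n ih =>
    show List.Chain' R (x :: LBtl f n (f x))
    refine List.IsChain.cons (ih ?_) ?_
    · intro t ht
      have := h (t + 1) (by omega)
      rwa [Function.iterate_succ_apply f t, Function.iterate_succ_apply f (t + 1)] at this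
    · intro y hy
      rw [LBtl_head?] at hy
      cases hy
      simpa using h 0 (by omega)

lemma LBtl_nodup {f : V → V} {n : ℕ} {x : V}
    (h : ∀ s t, s < t → t ≤ n → f^[s] x ≠ f^[t] x) : (LBtl f n x).Nodup := by
  induction n generalizing x with
  | zero => simp [LBtl]
  | succ n ih =>
    show (x :: LBtl f n (f x)).Nodup
    refine List.nodup_cons.2 ⟨?_, ih ?_⟩
    · intro hx
      rw [LBtl_mem] at hx
      obtain ⟨t, ht, he⟩ := hx
      refine h 0 (t + 1) (by omega) (by omega) ?_
      rw [Function.iterate_succ_apply]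
      exact he.symm
    · intro s t hst htn he
      refine h (s + 1) (t + 1) (by omega) (by omega) ?_
      rwa [Function.iterate_succ_apply f s, Function.iterate_succ_apply f t]

theorem LB_bubble_of_cert {D : Set (V × V)} {r v : V} {B : Set V}
    (hBr : B ⊆ {x | x ≠ r}) (c : LBCert D v B) : IsBubble D r v B := by
  classical
  set E := ent D B \ {v} with hEdef
  set N : V → ℕ := fun x => if h : x ∈ c.W then Nat.find (c.reach x h) else 0 with hN
  -- basic facts along trajectories from E
  have hNspec : ∀ u ∈ c.W, c.f^[N u + 1] u = v := by
    intro u hu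
    rw [hN]
    simp only [dif_pos hu]
    exact Nat.find_spec (c.reach u hu)
  have hNmin : ∀ u ∈ c.W, ∀ m, m < N u → c.f^[m + 1] u ≠ v := by
    intro u hu m hm
    rw [hN] at hm
    simp only [dif_pos hu] at hm
    exact Nat.find_min (c.reach u hu) hm
  have keyu : ∀ u ∈ c.W, ∀ t ≤ N u, c.f^[t] u ∈ c.W ∧ c.f^[t] u ≠ v := by
    intro u hu t
    induction t with
    | zero =>
      intro _
      refine ⟨hu, ?_⟩
      intro h
      simp only [Function.iterate_zero_apply] at h
      exact c.hv (h ▸ hu)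
    | succ t ih =>
      intro ht
      obtain ⟨hW, hv⟩ := ih (by omega)
      have hne : c.f^[t + 1] u ≠ v := by
        rcases Nat.lt_or_ge t (N u) with h | h
        · exact hNmin u hu t h
        · omega
      have : c.f (c.f^[t] u) = v ∨ c.f (c.f^[t] u) ∈ c.W := c.nxt _ hW
      rw [← Function.iterate_succ_apply' c.f t u] at this
      exact ⟨this.resolve_left hne, hne⟩
  have hEW : ∀ u ∈ E, u ∈ c.W := fun u hu => c.hE hu
  -- no two trajectories from E meet outside v
  have desc : ∀ s t : ℕ, ∀ u u', u ∈ E → u' ∈ E → s ≤ N u → t ≤ N u' →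
      c.f^[s] u = c.f^[t] u' → s = t ∧ u = u' := by
    intro s
    induction s with
    | zero =>
      intro t u u' hu hu' _ ht heq
      cases t with
      | zero => exact ⟨rfl, by simpa using heq⟩
      | succ t =>
        exfalso
        have hW : c.f^[t] u' ∈ c.W := (keyu u' (hEW u' hu') t (by omega)).1
        have := c.noE _ hW
        rw [← Function.iterate_succ_apply' c.f t u'] at this
        rw [← heq] at this
        exact this (by simpa [hEdef] using hu)
    | succ s ih =>
      intro t u u' hu hu' hs ht heq
      cases t with
      | zero =>
        exfalso
        have hW : c.f^[s] u ∈ c.W := (keyu u (hEW u hu) s (by omega)).1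
        have := c.noE _ hW
        rw [← Function.iterate_succ_apply' c.f s u] at this
        rw [heq] at this
        exact this (by simpa [hEdef] using hu')
      | succ t =>
        have h1 : c.f (c.f^[s] u) = c.f (c.f^[t] u') := by
          rw [← Function.iterate_succ_apply' c.f s u, ← Function.iterate_succ_apply' c.f t u']
          exact heq
        have hzv : c.f (c.f^[s] u) ≠ v := by
          rw [← Function.iterate_succ_apply' c.f s u]
          exact (keyu u (hEW u hu) (s + 1) hs).2
        have h2 := c.inj _ (keyu u (hEW u hu) s (by omega)).1 _
          (keyu u' (hEW u' hu') t (by omega)).1 h1 hzv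
        obtain ⟨h3, h4⟩ := ih t u u' hu hu' (by omega) (by omega) h2
        exact ⟨by omega, h4⟩
  have tn : ∀ u ∈ E, (LBtl c.f (N u + 1) u).Nodup := by
    intro u hu
    apply LBtl_nodup
    intro s t hst htn heq
    rcases Nat.lt_or_ge t (N u + 1) with ht | ht
    · have := desc s t u u hu hu (by omega) (by omega) heq
      omega
    · have ht' : t = N u + 1 := by omega
      subst ht'
      have : c.f^[s] u = v := heq.trans (hNspec u (hEW u hu))
      exact (keyu u (hEW u hu) s (by omega)).2 this
  -- the path system
  set P : Set (DiPath V) := {p | ∃ u ∈ E, p.verts = LBtl c.f (N u + 1) u} with hP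
  have hfirst : ∀ u ∈ E, ∀ p : DiPath V, p.verts = LBtl c.f (N u + 1) u → p.first = u := by
    intro u hu p hp
    rw [DiPath.first, LB_head_congr hp p.ne (LBtl_ne _ _ _), LBtl_head]
  refine ⟨hBr, P, ⟨?_, ?_⟩, ?_⟩
  · rintro p ⟨u, hu, hverts⟩
    constructor
    · rw [IsPathIn, hverts]
      apply LBtl_chain'
      intro t ht
      have hW : c.f^[t] u ∈ c.W := (keyu u (hEW u hu) t (by omega)).1
      have := c.edge _ hW
      rwa [← Function.iterate_succ_apply' c.f t u] at this
    · rw [DiPath.last, LB_getLast_congr hverts p.ne (LBtl_ne _ _ _), LBtl_getLast]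
      exact hNspec u (hEW u hu)
  · rintro p ⟨u, hu, hvp⟩ q ⟨u', hu', hvq⟩ hpq
    have huu : u ≠ u' := by
      rintro rfl
      exact hpq (LB_DiPath_ext (hvp.trans hvq.symm))
    ext z
    simp only [Set.mem_inter_iff, Set.mem_singleton_iff]
    constructor
    · rintro ⟨hzp, hzq⟩
      have hzp' : z ∈ LBtl c.f (N u + 1) u := hvp ▸ hzp
      have hzq' : z ∈ LBtl c.f (N u' + 1) u' := hvq ▸ hzq
      rw [LBtl_mem] at hzp' hzq'
      obtain ⟨s, hs, rfl⟩ := hzp'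
      obtain ⟨t, ht, heq⟩ := hzq'
      by_contra hzv
      have hs' : s ≤ N u := by
        rcases Nat.lt_or_ge s (N u + 1) with h | h
        · omega
        · exfalso; apply hzv
          have : s = N u + 1 := by omega
          rw [this]
          exact hNspec u (hEW u hu)
      have ht' : t ≤ N u' := by
        rcases Nat.lt_or_ge t (N u' + 1) with h | h
        · omega
        · exfalso; apply hzv
          have h2 : t = N u' + 1 := by omega
          rw [← heq, h2]
          exact hNspec u' (hEW u' hu')
      exact huu (desc s t u u' hu hu' hs' ht' heq.symm).2
    · intro hz
      rw [hz]
      constructor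
      · show v ∈ p.verts
        rw [hvp]
        rw [LBtl_mem]
        exact ⟨N u + 1, le_rfl, hNspec u (hEW u hu)⟩
      · show v ∈ q.verts
        rw [hvq]
        rw [LBtl_mem]
        exact ⟨N u' + 1, le_rfl, hNspec u' (hEW u' hu')⟩
  · rw [Vminus]
    ext z
    constructor
    · rintro ⟨p, ⟨u, hu, hverts⟩, rfl⟩
      rw [hfirst u hu p hverts]
      exact hu
    · intro hz
      refine ⟨⟨LBtl c.f (N z + 1) z, LBtl_ne _ _ _, tn z hz⟩, ⟨z, hz, rfl⟩, ?_⟩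
      exact hfirst z hz _ rfl

end LargestBubbleAux2
section LargestBubbleAux3

theorem LB_empty_isBubble (D : Set (V × V)) (r v : V) : IsBubble D r v (∅ : Set V) := by
  refine ⟨by simp, ∅, ⟨?_, ?_⟩, ?_⟩
  · intro p hp; exact absurd hp (Set.notMem_empty p)
  · intro p hp; exact absurd hp (Set.notMem_empty p)
  · rw [Vminus, Set.image_empty]
    ext x
    simp [ent]

theorem LB_union_isBubble (D : Set (V × V)) (r v : V) :
    IsBubble D r v (⋃₀ {B | IsBubble D r v B}) := by
  classical
  set 𝔅 : Set (Set V) := {B | IsBubble D r v B} with h𝔅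
  set Bg : Set V := ⋃₀ 𝔅 with hBgdef
  have hsub : ∀ i : ↥𝔅, (i.1 : Set V) ⊆ Bg := fun i => Set.subset_sUnion_of_mem i.2
  have hBr : Bg ⊆ {x | x ≠ r} := by
    rintro x ⟨B', hB', hxB'⟩
    exact hB'.1 hxB'
  let c : ∀ i : ↥𝔅, LBCert D v i.1 := fun i => (LB_cert_of_bubble i.2).some
  let rel : ↥𝔅 → ↥𝔅 → Prop := WellOrderingRel
  haveI hwo : IsWellOrder ↥𝔅 rel := WellOrderingRel.isWellOrder
  have hwf : WellFounded rel := IsWellFounded.wf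
  let i₀ : ↥𝔅 := ⟨∅, LB_empty_isBubble D r v⟩
  let S : V → Set ↥𝔅 := fun x => {i | x ∈ (c i).W}
  let kk : V → ↥𝔅 := fun x => if h : (S x).Nonempty then hwf.min (S x) h else i₀
  let F : V → V := fun x => if (S x).Nonempty then (c (kk x)).f x else v
  let φ : ↥𝔅 → Ordinal := fun i => Ordinal.typein rel i
  have hkkmem : ∀ x, (S x).Nonempty → x ∈ (c (kk x)).W := by
    intro x h
    show x ∈ (c (kk x)).W
    rw [show kk x = hwf.min (S x) h from dif_pos h]
    exact hwf.min_mem (S x) h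
  have hmin_le : ∀ x (h : (S x).Nonempty) (i : ↥𝔅), i ∈ S x → φ (kk x) ≤ φ i := by
    intro x h i hi
    rw [show kk x = hwf.min (S x) h from dif_pos h]
    exact le_of_not_gt (fun hlt => hwf.not_lt_min (S x) hi ((Ordinal.typein_lt_typein rel).1 hlt))
  have hF : ∀ x, (S x).Nonempty → F x = (c (kk x)).f x := fun x h => if_pos h
  have hFv : F v = v := by
    apply if_neg
    rintro ⟨i, hi⟩
    exact (c i).hv hi
  have habsorb : ∀ n : ℕ, F^[n] v = v := fun n => Function.iterate_fixed hFv n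
  have hstepW : ∀ x, (S x).Nonempty → F x ≠ v → F x ∈ (c (kk x)).W := by
    intro x h hne
    have h2 := (c (kk x)).nxt x (hkkmem x h)
    rw [← hF x h] at h2
    exact h2.resolve_left hne
  have hdec : ∀ x, (S x).Nonempty → F x ≠ v →
      (S (F x)).Nonempty ∧ φ (kk (F x)) ≤ φ (kk x) := by
    intro x h hne
    have h3 : F x ∈ (c (kk x)).W := hstepW x h hne
    exact ⟨⟨kk x, h3⟩, hmin_le (F x) ⟨kk x, h3⟩ (kk x) h3⟩
  have hnon : ∀ (m : ℕ) (x : V), (S x).Nonempty → F^[m] x ≠ v →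
      (S (F^[m] x)).Nonempty ∧ φ (kk (F^[m] x)) ≤ φ (kk x) := by
    intro m
    induction m with
    | zero => intro x h _; exact ⟨h, le_rfl⟩
    | succ m ih =>
      intro x h hne
      have hme : F^[m] x ≠ v := by
        intro hv'
        apply hne
        rw [Function.iterate_succ_apply' F m x, hv', hFv]
      obtain ⟨h1, hle1⟩ := ih x h hme
      have hne' : F (F^[m] x) ≠ v := by
        rw [← Function.iterate_succ_apply' F m x]; exact hne
      obtain ⟨h2, hle2⟩ := hdec _ h1 hne'
      rw [Function.iterate_succ_apply' F m x]
      exact ⟨h2, le_trans hle2 hle1⟩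
  -- termination of trajectories
  let NN : V → ℕ := fun x => if h : x ∈ (c (kk x)).W then Nat.find ((c (kk x)).reach x h) else 0
  let μ : V → Ordinal × ℕ := fun x => (φ (kk x), NN x)
  have hwfμ : WellFounded (InvImage
      (Prod.Lex ((· < ·) : Ordinal → Ordinal → Prop) ((· < ·) : ℕ → ℕ → Prop)) μ) :=
    InvImage.wf μ (WellFounded.prod_lex Ordinal.lt_wf (Nat.lt_wfRel.wf))
  have hdecμ : ∀ x, (S x).Nonempty → F x ≠ v →
      Prod.Lex ((· < ·) : Ordinal → Ordinal → Prop) ((· < ·) : ℕ → ℕ → Prop) (μ (F x)) (μ x) := by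
    intro x h hne
    obtain ⟨h', hle⟩ := hdec x h hne
    show Prod.Lex _ _ (φ (kk (F x)), NN (F x)) (φ (kk x), NN x)
    rcases lt_or_eq_of_le hle with hlt | heq
    · exact Prod.Lex.left _ _ hlt
    · have hkk : kk (F x) = kk x := (Ordinal.typein_inj rel).1 heq
      have hxW : x ∈ (c (kk x)).W := hkkmem x h
      have hFxW : F x ∈ (c (kk x)).W := hstepW x h hne
      have hFxW' : F x ∈ (c (kk (F x))).W := by rw [hkk]; exact hFxW
      have hNx : NN x = Nat.find ((c (kk x)).reach x hxW) := dif_pos hxW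
      have hNFx : NN (F x) = Nat.find ((c (kk (F x))).reach (F x) hFxW') := dif_pos hFxW'
      set n := Nat.find ((c (kk x)).reach x hxW) with hn
      have hspec : (c (kk x)).f^[n + 1] x = v := Nat.find_spec ((c (kk x)).reach x hxW)
      have hn1 : 1 ≤ n := by
        by_contra hcon
        push_neg at hcon
        have h0 : n = 0 := by omega
        rw [h0] at hspec
        simp only [zero_add, Function.iterate_one] at hspec
        exact hne (by rw [hF x h]; exact hspec)
      have hcand : (c (kk (F x))).f^[(n - 1) + 1] (F x) = v := by
        rw [hkk]
        have he : n - 1 + 1 = n := by omega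
        rw [he, hF x h, ← Function.iterate_succ_apply (c (kk x)).f n x]
        exact hspec
      have hlt2 : NN (F x) < NN x := by
        rw [hNx, hNFx]
        have h9 := Nat.find_le (h := (c (kk (F x))).reach (F x) hFxW') hcand
        omega
      rw [heq]
      exact Prod.Lex.right _ hlt2
  have hreach : ∀ x, (S x).Nonempty → ∃ n : ℕ, F^[n + 1] x = v := by
    intro x
    exact hwfμ.induction
      (C := fun z => (S z).Nonempty → ∃ n : ℕ, F^[n + 1] z = v) x
      (fun y ih hy => by
        by_cases hz : F y = v
        · exact ⟨0, by simpa using hz⟩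
        · obtain ⟨n, hn⟩ := ih (F y) (hdecμ y hy hz) ((hdec y hy hz).1)
          exact ⟨n + 1, by rw [Function.iterate_succ_apply F (n + 1) y]; exact hn⟩)
  set Eg : Set V := ent D Bg \ {v} with hEg
  have hEgS : ∀ u ∈ Eg, ∀ i : ↥𝔅, u ∈ i.1 → u ∈ (c i).W := by
    intro u hu i hui
    exact (c i).hE ⟨LB_ent_of_subset (hsub i) hu.1 hui, hu.2⟩
  have hEgW : ∀ u ∈ Eg, (S u).Nonempty := by
    intro u hu
    obtain ⟨B', hB', huB'⟩ := hu.1.1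
    exact ⟨⟨B', hB'⟩, hEgS u hu ⟨B', hB'⟩ huB'⟩
  have habs2 : ∀ (a b : ℕ) (x : V), a ≤ b → F^[a] x = v → F^[b] x = v := by
    intro a b x hab hv'
    have h1 : F^[b] x = F^[b - a] (F^[a] x) := by
      rw [← Function.iterate_add_apply]
      congr 1
      omega
    rw [h1, hv']
    exact habsorb _
  have hC : ∀ u ∈ Eg, ∀ (n : ℕ) (i : ↥𝔅), F^[n] u ≠ v → F^[n] u ∈ i.1 →
      φ (kk (F^[n] u)) ≤ φ i := by
    intro u hu n i hne hmem
    by_cases hui : u ∈ i.1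
    · have hW : u ∈ (c i).W := hEgS u hu i hui
      have h0 : (S u).Nonempty := ⟨i, hW⟩
      obtain ⟨h'', hle⟩ := hnon n u h0 hne
      exact hle.trans (hmin_le u h0 i hW)
    · have hT : ∃ t, t ≤ n ∧ F^[t] u ∈ i.1 := ⟨n, le_rfl, hmem⟩
      set s := Nat.find hT with hs
      obtain ⟨hsn, hsmem⟩ := Nat.find_spec hT
      rw [← hs] at hsn hsmem
      have hs1 : 1 ≤ s := by
        by_contra hcon
        push_neg at hcon
        have h0 : s = 0 := by omega
        rw [h0] at hsmem
        simp only [Function.iterate_zero_apply] at hsmem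
        exact hui hsmem
      have hsv : F^[s] u ≠ v := fun hv' => hne (habs2 s n u hsn hv')
      have hpv : F^[s - 1] u ≠ v := fun hv' => hne (habs2 (s - 1) n u (by omega) hv')
      have hpmem : F^[s - 1] u ∉ i.1 := by
        intro hcon
        exact Nat.find_min hT (show s - 1 < s by omega) ⟨by omega, hcon⟩
      have hpS : (S (F^[s - 1] u)).Nonempty := (hnon (s - 1) u (hEgW u hu) hpv).1
      have hFeq : F (F^[s - 1] u) = F^[s] u := by
        conv_rhs => rw [show s = (s - 1) + 1 by omega]
        rw [Function.iterate_succ_apply' F (s - 1) u]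
      have hedge : (F^[s - 1] u, F^[s] u) ∈ D := by
        rw [← hFeq, hF _ hpS]
        exact ((c (kk (F^[s - 1] u))).edge _ (hkkmem _ hpS)).1
      have hWs : F^[s] u ∈ (c i).W := (c i).hE ⟨⟨hsmem, F^[s - 1] u, hpmem, hedge⟩, hsv⟩
      have hSs : (S (F^[s] u)).Nonempty := ⟨i, hWs⟩
      have hrest : F^[n] u = F^[n - s] (F^[s] u) := by
        rw [← Function.iterate_add_apply]
        congr 1
        omega
      have hne2 : F^[n - s] (F^[s] u) ≠ v := by rw [← hrest]; exact hne
      obtain ⟨h'', hle⟩ := hnon (n - s) (F^[s] u) hSs hne2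
      have hfin := hle.trans (hmin_le _ hSs i hWs)
      rw [← hrest] at hfin
      exact hfin
  set Wg : Set V := {x | x ≠ v ∧ ∃ u ∈ Eg, ∃ n : ℕ, F^[n] u = x} with hWg
  have hWgS : ∀ x ∈ Wg, (S x).Nonempty := by
    rintro x ⟨hxv, u, hu, n, rfl⟩
    exact (hnon n u (hEgW u hu) hxv).1
  refine LB_bubble_of_cert hBr ⟨Wg, F, ?_, ?_, ?_, ?_, ?_, ?_, ?_⟩
  · intro h; exact h.1 rfl
  · intro u hu
    exact ⟨by simpa using hu.2, u, hu, 0, rfl⟩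
  · intro x hx
    have hS := hWgS x hx
    rw [hF x hS]
    exact LB_induceE_mono (hsub (kk x)) ((c (kk x)).edge x (hkkmem x hS))
  · intro x hx
    by_cases hz : F x = v
    · exact Or.inl hz
    · right
      obtain ⟨hxv, u, hu, n, rfl⟩ := hx
      exact ⟨hz, u, hu, n + 1, by rw [Function.iterate_succ_apply' F n u]⟩
  · have hlt : ∀ x y : V, x ∈ Wg → y ∈ Wg → F x = F y → F x ≠ v →
        φ (kk x) < φ (kk y) → False := by
      intro x y hx hy heq hnev hφ
      have hSx := hWgS x hx
      have hSy := hWgS y hy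
      by_cases hyi : y ∈ (kk x).1
      · obtain ⟨hyv, u, hu, n, hn⟩ := hy
        have h1 : F^[n] u ≠ v := by rw [hn]; exact hyv
        have h2 : F^[n] u ∈ (kk x).1 := by rw [hn]; exact hyi
        have h3 := hC u hu n (kk x) h1 h2
        rw [hn] at h3
        exact absurd h3 (not_le_of_gt hφ)
      · have hz1 : F x ∈ (kk x).1 := by
          rw [hF x hSx]
          exact ((c (kk x)).edge x (hkkmem x hSx)).2.2
        have hedge : (y, F x) ∈ D := by
          rw [heq, hF y hSy]
          exact ((c (kk y)).edge y (hkkmem y hSy)).1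
        have hent : F x ∈ ent D (kk x).1 := ⟨hz1, y, hyi, hedge⟩
        have hnoE := (c (kk x)).noE x (hkkmem x hSx)
        rw [← hF x hSx] at hnoE
        exact hnoE ⟨hent, by simpa using hnev⟩
    intro x hx y hy heq hnev
    rcases lt_trichotomy (φ (kk x)) (φ (kk y)) with h | h | h
    · exact (hlt x y hx hy heq hnev h).elim
    · have hkk : kk x = kk y := (Ordinal.typein_inj rel).1 h
      have hSx := hWgS x hx
      have hSy := hWgS y hy
      refine (c (kk x)).inj x (hkkmem x hSx) y ?_ ?_ ?_
      · rw [hkk]; exact hkkmem y hSy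
      · rw [← hF x hSx, show (c (kk x)).f y = (c (kk y)).f y by rw [hkk], ← hF y hSy]
        exact heq
      · rw [← hF x hSx]; exact hnev
    · exact (hlt y x hy hx heq.symm (by rw [← heq]; exact hnev) h).elim
  · intro x hx hcon
    have hS := hWgS x hx
    have hz1 : F x ∈ (kk x).1 := by
      rw [hF x hS]
      exact ((c (kk x)).edge x (hkkmem x hS)).2.2
    have hent : F x ∈ ent D (kk x).1 := LB_ent_of_subset (hsub (kk x)) hcon.1 hz1
    have hnoE := (c (kk x)).noE x (hkkmem x hS)
    rw [← hF x hS] at hnoE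
    exact hnoE ⟨hent, hcon.2⟩
  · intro x hx
    exact hreach x (hWgS x hx)

theorem LB_pair_isBubble {D : Set (V × V)} {r v : V} (hsimple : NoLoops D) (hvr : v ≠ r)
    {u : V} (hD : (u, v) ∈ D) (hur : u ≠ r) : IsBubble D r v {u, v} := by
  have huv : u ≠ v := fun h => hsimple v (h ▸ hD)
  refine ⟨?_, ?_⟩
  · rintro x (rfl | rfl)
    · exact hur
    · exact hvr
  · by_cases hent : u ∈ ent D {u, v}
    · refine ⟨{⟨[u, v], by simp, by simp [huv]⟩}, ⟨?_, ?_⟩, ?_⟩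
      · intro p hp
        rw [Set.mem_singleton_iff] at hp
        subst hp
        constructor
        · show List.Chain' _ [u, v]
          refine List.isChain_cons_cons.2 ⟨?_, ?_⟩
          · exact ⟨hD, Or.inl rfl, Or.inr rfl⟩
          · exact List.isChain_singleton _
        · show ([u, v].getLast _) = v
          rfl
      · intro p hp q hq hpq
        rw [Set.mem_singleton_iff] at hp hq
        exact absurd (hp.trans hq.symm) hpq
      · have hfst : DiPath.first (⟨[u, v], by simp, by simp [huv]⟩ : DiPath V) = u := rfl
        rw [Vminus, Set.image_singleton, hfst]
        ext x
        constructor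
        · intro hx
          rw [Set.mem_singleton_iff] at hx
          subst hx
          exact ⟨hent, by simpa using huv⟩
        · rintro ⟨hx1, hx2⟩
          rcases hx1.1 with rfl | rfl
          · exact rfl
          · exact (hx2 rfl).elim
    · refine ⟨∅, ⟨?_, ?_⟩, ?_⟩
      · intro p hp; exact absurd hp (Set.notMem_empty p)
      · intro p hp; exact absurd hp (Set.notMem_empty p)
      · rw [Vminus, Set.image_empty]
        ext x
        simp only [Set.mem_empty_iff_false, false_iff]
        rintro ⟨hx1, hx2⟩
        rcases hx1.1 with rfl | rfl
        · exact hent hx1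
        · exact (hx2 rfl).elim

end LargestBubbleAux3

/-- For every `v ∈ V − r` there is a `⊆`-largest `v`-bubble in `D`, and it contains all
in-neighbours of `v` in `D − rv`. -/
theorem largest_bubble_exists (D : Set (V × V)) (r : V)
    (hsimple : NoLoops D) (hroot : IsRoot D r) (v : V) (hv : v ≠ r) :
    ∃ B, IsBubble D r v B ∧ (∀ B', IsBubble D r v B' → B' ⊆ B) ∧
      Nminus (D \ {(r, v)}) v ⊆ B := by
  classical
  refine ⟨⋃₀ {B | IsBubble D r v B}, LB_union_isBubble D r v,
    fun B' h => Set.subset_sUnion_of_mem h, ?_⟩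
  intro u hu
  have hD : (u, v) ∈ D := hu.1
  have hne : (u, v) ≠ (r, v) := by simpa using hu.2
  have hur : u ≠ r := fun h => hne (by rw [h])
  exact Set.mem_sUnion.2 ⟨{u, v}, LB_pair_isBubble hsimple hv hD hur, Or.inl rfl⟩
end
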